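/- arXiv:0709.3425 — 2 statements merged into one kernel-verified Lean document; each statement's English description precedes it below -/
import Mathlib

section
/- For n ≥ 3, the simple line arrangement consisting of the two coordinate axes together with the n-2 lines x/(1+(k-3)ε) + y/(1-(k-3)ε) = 1 for k = 3,…,n (with (1+(n-3)ε, 1-(n-3)ε) replaced by intercepts (2, 2+ε) for k = n), where 0 < ε < 1/(n-3), is simple: any two of the n lines intersect in exactly one point and no three are concurrent. -/
private lemma aux_pair {A B C A' B' C' : ℝ} (h : A * B' - A' * B ≠ 0) :
    ∃! p : Fin 2 → ℝ, p ∈ {x : Fin 2 → ℝ | A * x 0 + B * x 1 = C} ∩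
      {x : Fin 2 → ℝ | A' * x 0 + B' * x 1 = C'} := by
  refine ⟨![(C * B' - C' * B) / (A * B' - A' * B),
            (A * C' - A' * C) / (A * B' - A' * B)], ⟨?_, ?_⟩, ?_⟩
  · show A * _ + B * _ = C
    simp only [Matrix.cons_val_zero, Matrix.cons_val_one, Matrix.head_cons]
    rw [show A * ((C * B' - C' * B) / (A * B' - A' * B)) +
        B * ((A * C' - A' * C) / (A * B' - A' * B)) =
        (A * (C * B' - C' * B) + B * (A * C' - A' * C)) / (A * B' - A' * B) by ring,
      div_eq_iff h]
    ring
  · show A' * _ + B' * _ = C'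
    simp only [Matrix.cons_val_zero, Matrix.cons_val_one, Matrix.head_cons]
    rw [show A' * ((C * B' - C' * B) / (A * B' - A' * B)) +
        B' * ((A * C' - A' * C) / (A * B' - A' * B)) =
        (A' * (C * B' - C' * B) + B' * (A * C' - A' * C)) / (A * B' - A' * B) by ring,
      div_eq_iff h]
    ring
  · rintro q ⟨h1, h2⟩
    simp only [Set.mem_setOf_eq] at h1 h2
    have e0 : q 0 = (C * B' - C' * B) / (A * B' - A' * B) := by
      rw [eq_div_iff h]; linear_combination B' * h1 - B * h2
    have e1 : q 1 = (A * C' - A' * C) / (A * B' - A' * B) := by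
      rw [eq_div_iff h]; linear_combination A * h2 - A' * h1
    funext i
    fin_cases i
    · exact e0
    · exact e1

private lemma aux_triple {A B C A' B' C' A'' B'' C'' : ℝ} (p : Fin 2 → ℝ)
    (h1 : A * p 0 + B * p 1 = C) (h2 : A' * p 0 + B' * p 1 = C')
    (h3 : A'' * p 0 + B'' * p 1 = C'')
    (hd : A * (B' * C'' - B'' * C') - A' * (B * C'' - B'' * C) +
      A'' * (B * C' - B' * C) ≠ 0) : False := by
  apply hd
  rw [← h1, ← h2, ← h3]
  ring

private lemma set_form (a b : ℝ) (ha : a ≠ 0) (hb : b ≠ 0) :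
    {x : Fin 2 → ℝ | x 0 / a + x 1 / b = 1} =
    {x : Fin 2 → ℝ | b * x 0 + a * x 1 = a * b} := by
  ext x
  simp only [Set.mem_setOf_eq]
  rw [div_add_div _ _ ha hb, div_eq_iff (mul_ne_zero ha hb)]
  constructor <;> intro h <;> linarith

set_option maxHeartbeats 1600000 in
/-- The explicit line arrangement `A°₂,ₙ` is simple: it consists of the two
coordinate axes `h₁ : y = 0` and `h₂ : x = 0`, the lines
`x/(1+(k-3)ε) + y/(1-(k-3)ε) = 1` for `k = 3, …, n-1`, and the line
`x/2 + y/(2+ε) = 1` for `k = n`, where `0 < ε < 1/(n-3)`.  Any two of the `n`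
lines intersect in exactly one point, and no three are concurrent. -/
theorem explicit_arrangement_simple (n : ℕ) (hn : 3 ≤ n) (ε : ℝ)
    (hε : 0 < ε ∧ ε < 1 / ((n : ℝ) - 3))
    (f : ℕ → Set (Fin 2 → ℝ))
    (hf1 : f 1 = {x : Fin 2 → ℝ | x 1 = 0})
    (hf2 : f 2 = {x : Fin 2 → ℝ | x 0 = 0})
    (hfk : ∀ k : ℕ, 3 ≤ k → k ≤ n - 1 →
      f k = {x : Fin 2 → ℝ |
        x 0 / (1 + ((k : ℝ) - 3) * ε) + x 1 / (1 - ((k : ℝ) - 3) * ε) = 1})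
    (hfn : f n = {x : Fin 2 → ℝ | x 0 / 2 + x 1 / (2 + ε) = 1}) :
    (∀ i ∈ Finset.Icc 1 n, ∀ j ∈ Finset.Icc 1 n, i ≠ j →
      ∃! p : Fin 2 → ℝ, p ∈ f i ∩ f j) ∧
    (∀ i ∈ Finset.Icc 1 n, ∀ j ∈ Finset.Icc 1 n, ∀ k ∈ Finset.Icc 1 n,
      i ≠ j → j ≠ k → i ≠ k →
      ¬∃ p : Fin 2 → ℝ, p ∈ f i ∧ p ∈ f j ∧ p ∈ f k) := by
  obtain ⟨hε1, hε2⟩ := hε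
  have hn4 : 4 ≤ n := by
    by_contra h
    have hn3 : n = 3 := by omega
    rw [hn3] at hε2
    norm_num at hε2
    linarith
  have hne : (0:ℝ) < (n:ℝ) - 3 := by
    have : (4:ℝ) ≤ (n:ℝ) := by exact_mod_cast hn4
    linarith
  have hkey : ε * ((n:ℝ) - 3) < 1 := (lt_div_iff₀ hne).mp hε2
  -- uniform representation of the intercept lines
  have hrep : ∀ i : ℕ, 3 ≤ i → i ≤ n → ∃ a b : ℝ, 0 < a ∧ 0 < b ∧
      f i = {x : Fin 2 → ℝ | b * x 0 + a * x 1 = a * b} ∧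
      ((a = 1 + ((i:ℝ) - 3) * ε ∧ b = 1 - ((i:ℝ) - 3) * ε ∧
        0 ≤ (i:ℝ) - 3 ∧ ((i:ℝ) - 3) * ε + ε < 1 ∧ i ≠ n) ∨
       (i = n ∧ a = 2 ∧ b = 2 + ε)) := by
    intro i h3 hin
    rcases eq_or_lt_of_le hin with rfl | hlt
    · exact ⟨2, 2 + ε, by norm_num, by linarith,
        by rw [hfn, set_form 2 (2 + ε) (by norm_num) (by linarith)],
        Or.inr ⟨rfl, rfl, rfl⟩⟩
    · have hi3 : (3:ℝ) ≤ (i:ℝ) := by exact_mod_cast h3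
      have hs0 : (0:ℝ) ≤ (i:ℝ) - 3 := by linarith
      have hin1 : (i:ℝ) ≤ (n:ℝ) - 1 := by
        have : i + 1 ≤ n := hlt
        have : ((i:ℝ) + 1) ≤ (n:ℝ) := by exact_mod_cast this
        linarith
      have hsup : ((i:ℝ) - 3) * ε + ε < 1 := by nlinarith
      have ha : (0:ℝ) < 1 + ((i:ℝ) - 3) * ε := by nlinarith
      have hb : (0:ℝ) < 1 - ((i:ℝ) - 3) * ε := by nlinarith
      refine ⟨1 + ((i:ℝ) - 3) * ε, 1 - ((i:ℝ) - 3) * ε, ha, hb, ?_,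
        Or.inl ⟨rfl, rfl, hs0, hsup, by omega⟩⟩
      rw [hfk i h3 (by omega), set_form _ _ (ne_of_gt ha) (ne_of_gt hb)]
  have e1 : f 1 = {x : Fin 2 → ℝ | 0 * x 0 + 1 * x 1 = 0} := by
    rw [hf1]; ext x; simp
  have e2 : f 2 = {x : Fin 2 → ℝ | 1 * x 0 + 0 * x 1 = 0} := by
    rw [hf2]; ext x; simp
  -- pairwise intersections, sorted version
  have epair : ∀ i j : ℕ, 1 ≤ i → i < j → j ≤ n →
      ∃! p : Fin 2 → ℝ, p ∈ f i ∩ f j := by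
    intro i j h1 hij hjn
    rcases Nat.lt_or_ge i 3 with hi | hi
    · interval_cases i
      · rcases Nat.lt_or_ge j 3 with hj | hj
        · interval_cases j
          · rw [e1, e2]
            exact aux_pair (by norm_num)
        · obtain ⟨a, b, ha, hb, heq, -⟩ := hrep j hj hjn
          rw [e1, heq]
          exact aux_pair (ne_of_lt (by nlinarith))
      · have hj : 3 ≤ j := by omega
        obtain ⟨a, b, ha, hb, heq, -⟩ := hrep j hj hjn
        rw [e2, heq]
        exact aux_pair (ne_of_gt (by nlinarith))
    · have hj : 3 ≤ j := by omega
      obtain ⟨a, b, ha, hb, heq, hc⟩ := hrep i hi (le_of_lt (lt_of_lt_of_le hij hjn))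
      obtain ⟨a', b', ha', hb', heq', hc'⟩ := hrep j hj hjn
      rw [heq, heq']
      apply aux_pair
      have hij' : (0:ℝ) < (j:ℝ) - (i:ℝ) := by
        have : (i:ℝ) < (j:ℝ) := by exact_mod_cast hij
        linarith
      rcases hc with ⟨ra, rb, hs0, hsup, -⟩ | ⟨rfl, -, -⟩
      · rcases hc' with ⟨ra', rb', ht0, htup, -⟩ | ⟨rfl, ra', rb'⟩
        · subst ra rb ra' rb'
          exact ne_of_gt (by nlinarith [mul_pos hε1 hij'])
        · subst ra rb ra' rb'
          exact ne_of_lt (by nlinarith [mul_nonneg hs0 hε1.le, mul_nonneg (mul_nonneg hs0 hε1.le) hε1.le])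
      · exact absurd hjn (not_le.mpr hij)
  -- triples, sorted version
  have etriple : ∀ i j k : ℕ, 1 ≤ i → i < j → j < k → k ≤ n →
      ∀ p : Fin 2 → ℝ, p ∈ f i → p ∈ f j → p ∈ f k → False := by
    intro i j k h1 hij hjk hkn p hpi hpj hpk
    have hk3 : 3 ≤ k := by omega
    obtain ⟨a'', b'', ha'', hb'', heq'', hc''⟩ := hrep k hk3 hkn
    rw [heq''] at hpk
    simp only [Set.mem_setOf_eq] at hpk
    rcases Nat.lt_or_ge j 3 with hj3 | hj3
    · -- i = 1, j = 2
      have hi1 : i = 1 := by omega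
      have hj2 : j = 2 := by omega
      subst hi1 hj2
      rw [hf1] at hpi
      rw [hf2] at hpj
      simp only [Set.mem_setOf_eq] at hpi hpj
      rw [hpi, hpj] at hpk
      nlinarith [mul_pos ha'' hb'']
    · obtain ⟨a', b', ha', hb', heq', hc'⟩ := hrep j hj3 (by omega)
      rw [heq'] at hpj
      simp only [Set.mem_setOf_eq] at hpj
      rcases hc' with ⟨ra', rb', ht0, htup, -⟩ | ⟨rfl, -, -⟩
      swap
      · omega
      have hjk' : (0:ℝ) < (k:ℝ) - (j:ℝ) := by
        have : (j:ℝ) < (k:ℝ) := by exact_mod_cast hjk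
        linarith
      rcases Nat.lt_or_ge i 3 with hi3 | hi3
      · interval_cases i
        · -- i = 1
          rw [hf1] at hpi
          simp only [Set.mem_setOf_eq] at hpi
          refine aux_triple p (show (0:ℝ) * p 0 + 1 * p 1 = 0 by rw [hpi]; ring)
            hpj hpk ?_
          rcases hc'' with ⟨ra'', rb'', hu0, huup, -⟩ | ⟨-, ra'', rb''⟩
          · subst ra' rb' ra'' rb''
            exact ne_of_lt (by nlinarith [mul_pos (mul_pos hb' hb'') (mul_pos hε1 hjk')])
          · subst ra' rb' ra'' rb''
            exact ne_of_lt (by nlinarith [mul_pos (mul_pos hb' hb') (show (0:ℝ) < 2 + ε by linarith)])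
        · -- i = 2
          rw [hf2] at hpi
          simp only [Set.mem_setOf_eq] at hpi
          refine aux_triple p (show (1:ℝ) * p 0 + 0 * p 1 = 0 by rw [hpi]; ring)
            hpj hpk ?_
          rcases hc'' with ⟨ra'', rb'', hu0, huup, -⟩ | ⟨-, ra'', rb''⟩
          · subst ra' rb' ra'' rb''
            exact ne_of_lt (by nlinarith [mul_pos (mul_pos ha' ha'') (mul_pos hε1 hjk')])
          · subst ra' rb' ra'' rb''
            exact ne_of_gt (by nlinarith [ha', mul_pos ha' hε1, mul_nonneg ha'.le (mul_nonneg ht0 hε1.le)])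
      · obtain ⟨a, b, ha, hb, heq, hc⟩ := hrep i hi3 (by omega)
        rw [heq] at hpi
        simp only [Set.mem_setOf_eq] at hpi
        rcases hc with ⟨ra, rb, hs0, hsup, -⟩ | ⟨rfl, -, -⟩
        swap
        · omega
        have hij' : (0:ℝ) < (j:ℝ) - (i:ℝ) := by
          have : (i:ℝ) < (j:ℝ) := by exact_mod_cast hij
          linarith
        have hik' : (0:ℝ) < (k:ℝ) - (i:ℝ) := by linarith
        refine aux_triple p hpi hpj hpk ?_
        rcases hc'' with ⟨ra'', rb'', hu0, huup, -⟩ | ⟨-, ra'', rb''⟩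
        · -- three middle lines
          subst ra rb ra' rb' ra'' rb''
          exact ne_of_lt (by nlinarith [mul_pos (mul_pos hε1 (mul_pos hε1 hε1)) (mul_pos hij' (mul_pos hik' hjk'))])
        · -- two middle lines and the last line
          subst ra rb ra' rb' ra'' rb''
          have hsA : (0:ℝ) < 1 - ε - ((i:ℝ) - 3) * ε := by linarith
          have htA : (0:ℝ) < 1 - ε - ((j:ℝ) - 3) * ε := by linarith
          have hB : (0:ℝ) < 2 + 3 * ε / 2 - (((i:ℝ) - 3) + ((j:ℝ) - 3)) * ε ^ 2 / 2
              - (2 + ε / 2) * (((i:ℝ) - 3) * ((j:ℝ) - 3)) * ε ^ 2 := by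
            nlinarith [mul_pos hsA htA, mul_pos hε1 (mul_pos hsA htA), mul_pos hε1 hsA, mul_pos hε1 htA, mul_nonneg hs0 (mul_nonneg ht0 (sq_nonneg ε)), mul_pos hε1 hε1]
          exact ne_of_gt (by nlinarith [mul_pos (mul_pos hε1 hij') hB])
  constructor
  · intro i hi j hj hij
    simp only [Finset.mem_Icc] at hi hj
    rcases lt_or_gt_of_ne hij with h | h
    · exact epair i j hi.1 h hj.2
    · have := epair j i hj.1 h hi.2
      rwa [Set.inter_comm (f j) (f i)] at this
  · intro i hi j hj k hk hij hjk hik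
    simp only [Finset.mem_Icc] at hi hj hk
    rintro ⟨p, hpi, hpj, hpk⟩
    rcases lt_or_gt_of_ne hij with h1 | h1 <;>
      rcases lt_or_gt_of_ne hjk with h2 | h2 <;>
        rcases lt_or_gt_of_ne hik with h3 | h3
    · exact etriple i j k hi.1 h1 h2 hk.2 p hpi hpj hpk
    · omega
    · exact etriple i k j hi.1 h3 h2 hj.2 p hpi hpk hpj
    · exact etriple k i j hk.1 h3 h1 hj.2 p hpk hpi hpj
    · exact etriple j i k hj.1 h1 h3 hk.2 p hpj hpi hpk
    · exact etriple j k i hj.1 h2 h3 hi.2 p hpj hpk hpi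
    · omega
    · exact etriple k j i hk.1 h2 h1 hi.2 p hpk hpj hpi
end

section
/- In a simple line arrangement with n ≥ 4 lines, any line whose two end-vertices receive redistributed weights summing according to the scheme (type h₂,₂: both end-vertices incident to exactly 2 bounded edges) receives total weight at least 1; a line of type h₃,₃ (both end-vertices incident to exactly 3 bounded edges) receives weight at least 2; and a line of type h₂,₃ receives weight at least 2, since it contains an external vertex incident to 4 bounded edges contributing weight 1/2 to it beyond its end-vertices. -/
open Set Bornology

/-- Points of the plane. -/
abbrev Pt2 := Fin 2 → ℝ

/-- A line in the plane, given by a linear equation with nonzero normal. -/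
def IsLine (L : Set Pt2) : Prop :=
  ∃ a b c : ℝ, ¬(a = 0 ∧ b = 0) ∧ L = {x : Pt2 | a * x 0 + b * x 1 = c}

/-- A simple arrangement of `n` lines in the plane: any two lines meet in
exactly one point and no three lines are concurrent. -/
structure SimpleLineArrangement (n : ℕ) where
  lines : Finset (Set Pt2)
  card_eq : lines.card = n
  isLine : ∀ L ∈ lines, IsLine L
  pair_inter : ∀ L ∈ lines, ∀ M ∈ lines, L ≠ M → ∃! p : Pt2, p ∈ L ∩ M
  no_three : ∀ L ∈ lines, ∀ M ∈ lines, ∀ N ∈ lines,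
      L ≠ M → M ≠ N → L ≠ N → ¬∃ p : Pt2, p ∈ L ∧ p ∈ M ∧ p ∈ N

namespace SimpleLineArrangement

variable {n : ℕ}

/-- The union of the lines of the arrangement. -/
def U (A : SimpleLineArrangement n) : Set Pt2 := ⋃ L ∈ A.lines, L

/-- The union of the lines other than `L`. -/
def othersU (A : SimpleLineArrangement n) (L : Set Pt2) : Set Pt2 :=
  ⋃ M ∈ {M : Set Pt2 | M ∈ A.lines ∧ M ≠ L}, M

/-- A cell: the closure of a connected component of the complement of the lines. -/
def IsCell (A : SimpleLineArrangement n) (C : Set Pt2) : Prop :=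
  ∃ x ∈ A.Uᶜ, C = closure (connectedComponentIn A.Uᶜ x)

/-- An edge: the closure of a connected component of a line minus the other lines. -/
def IsEdge (A : SimpleLineArrangement n) (E : Set Pt2) : Prop :=
  ∃ L ∈ A.lines, ∃ x ∈ L \ A.othersU L,
    E = closure (connectedComponentIn (L \ A.othersU L) x)

/-- A vertex: an intersection point of two distinct lines of the arrangement. -/
def IsVertex (A : SimpleLineArrangement n) (v : Pt2) : Prop :=
  ∃ L ∈ A.lines, ∃ M ∈ A.lines, L ≠ M ∧ v ∈ L ∩ M

/-- An external edge (external facet): a bounded edge belonging to exactly one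
bounded cell. -/
def IsExternalEdge (A : SimpleLineArrangement n) (E : Set Pt2) : Prop :=
  A.IsEdge E ∧ IsBounded E ∧
    ∃! C : Set Pt2, A.IsCell C ∧ IsBounded C ∧ E ⊆ C

/-- An external vertex: a vertex incident to some external edge. -/
def IsExternalVertex (A : SimpleLineArrangement n) (v : Pt2) : Prop :=
  A.IsVertex v ∧ ∃ E : Set Pt2, A.IsExternalEdge E ∧ v ∈ E

/-- The number of external edges (external facets). -/
noncomputable def extEdgeCount (A : SimpleLineArrangement n) : ℕ :=
  Nat.card {E : Set Pt2 | A.IsExternalEdge E}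

/-- The number of external vertices. -/
noncomputable def extVertexCount (A : SimpleLineArrangement n) : ℕ :=
  Nat.card {v : Pt2 | A.IsExternalVertex v}

/-- The vertices lying on a line `L`. -/
def verticesOn (A : SimpleLineArrangement n) (L : Set Pt2) : Set Pt2 :=
  {v : Pt2 | A.IsVertex v ∧ v ∈ L}

/-- An end-vertex of a line `L`: an extreme intersection point along `L`. -/
def IsEndVertex (A : SimpleLineArrangement n) (L : Set Pt2) (v : Pt2) : Prop :=
  v ∈ A.verticesOn L ∧ v ∉ convexHull ℝ (A.verticesOn L \ {v})

/-- The number of bounded edges incident to a point `v`. -/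
noncomputable def bdeg (A : SimpleLineArrangement n) (v : Pt2) : ℕ :=
  Nat.card {E : Set Pt2 | A.IsEdge E ∧ IsBounded E ∧ v ∈ E}

end SimpleLineArrangement

section Aux

open SimpleLineArrangement Filter

/-! ### Chosen linear functionals for lines -/

open Classical in
noncomputable def co (L : Set Pt2) : ℝ × ℝ × ℝ :=
  if h : IsLine L then (h.choose, h.choose_spec.choose, h.choose_spec.choose_spec.choose)
  else (1, 0, 0)

noncomputable def lf (L : Set Pt2) (x : Pt2) : ℝ :=
  (co L).1 * x 0 + (co L).2.1 * x 1 - (co L).2.2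

noncomputable def dlf (L : Set Pt2) (v : Pt2) : ℝ :=
  (co L).1 * v 0 + (co L).2.1 * v 1

lemma co_spec {L : Set Pt2} (h : IsLine L) :
    ¬((co L).1 = 0 ∧ (co L).2.1 = 0) ∧
      L = {x : Pt2 | (co L).1 * x 0 + (co L).2.1 * x 1 = (co L).2.2} := by
  have h2 := h.choose_spec.choose_spec.choose_spec
  rw [co, dif_pos h]
  exact h2

lemma mem_iff_lf {L : Set Pt2} (h : IsLine L) {x : Pt2} : x ∈ L ↔ lf L x = 0 := by
  conv_lhs => rw [(co_spec h).2]
  simp only [Set.mem_setOf_eq, lf, sub_eq_zero]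

lemma co_ne {L : Set Pt2} (h : IsLine L) : ¬((co L).1 = 0 ∧ (co L).2.1 = 0) :=
  (co_spec h).1

lemma lf_add_smul (L : Set Pt2) (x v : Pt2) (t : ℝ) :
    lf L (x + t • v) = lf L x + t * dlf L v := by
  simp only [lf, dlf, Pi.add_apply, Pi.smul_apply, smul_eq_mul]
  ring

lemma lf_combo (L : Set Pt2) (x y : Pt2) (s t : ℝ) (hst : s + t = 1) :
    lf L (s • x + t • y) = s * lf L x + t * lf L y := by
  simp only [lf, Pi.add_apply, Pi.smul_apply, smul_eq_mul]
  have : t = 1 - s := by linarith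
  subst this; ring

lemma continuous_lf (L : Set Pt2) : Continuous (lf L) := by
  unfold lf
  exact ((continuous_const.mul (continuous_apply 0)).add
    (continuous_const.mul (continuous_apply 1))).sub continuous_const

/-! ### sign helpers -/

lemma sign_trans {a b c : ℝ} (h1 : 0 < a * b) (h2 : 0 < b * c) : 0 < a * c := by
  have hb : b ≠ 0 := by rintro rfl; simp at h1
  have hb2 : 0 < b * b := mul_self_pos.2 hb
  nlinarith [mul_pos h1 h2]

lemma sign_transfer {u w z : ℝ} (h : 0 < u * w) : 0 ≤ u * z ↔ 0 ≤ w * z := by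
  have hu : u ≠ 0 := by rintro rfl; simp at h
  have hw : w ≠ 0 := by rintro rfl; simp at h
  have hu2 : 0 < u * u := mul_self_pos.2 hu
  have hw2 : 0 < w * w := mul_self_pos.2 hw
  constructor <;> intro h2 <;> nlinarith [mul_nonneg h2 h.le]

lemma pos_combo {A B C s t : ℝ} (h1 : 0 < A * B) (h2 : 0 < A * C) (hs : 0 ≤ s) (ht : 0 ≤ t)
    (hst : s + t = 1) : 0 < A * (s * B + t * C) := by
  have : A * (s * B + t * C) = s * (A * B) + t * (A * C) := by ring
  rw [this]
  rcases eq_or_lt_of_le hs with hs0 | hs0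
  · rw [← hs0]
    have ht1 : t = 1 := by linarith
    rw [ht1]
    simpa using h2
  · nlinarith [mul_nonneg ht h2.le]

/-! ### preconnected sets and sign constancy -/

lemma sameSide_of_preconnected {S : Set Pt2} (hS : IsPreconnected S) (f : Pt2 → ℝ)
    (hf : Continuous f) (hne : ∀ z ∈ S, f z ≠ 0) {x y : Pt2} (hx : x ∈ S) (hy : y ∈ S) :
    0 < f x * f y := by
  rcases lt_trichotomy (f x * f y) 0 with h | h | h
  · exfalso
    have himg : IsPreconnected (f '' S) := hS.image f hf.continuousOn
    have h0 : (0 : ℝ) ∈ f '' S := by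
      rcases mul_neg_iff.1 h with ⟨hx', hy'⟩ | ⟨hx', hy'⟩
      · exact himg.Icc_subset ⟨y, hy, rfl⟩ ⟨x, hx, rfl⟩ ⟨hy'.le, hx'.le⟩
      · exact himg.Icc_subset ⟨x, hx, rfl⟩ ⟨y, hy, rfl⟩ ⟨hx'.le, hy'.le⟩
    rcases h0 with ⟨z, hz, hz0⟩
    exact hne z hz hz0
  · exfalso
    rcases mul_eq_zero.1 h with h' | h'
    · exact hne x hx h'
    · exact hne y hy h'
  · exact h

lemma mem_closure_segment {S : Set Pt2} {x y : Pt2}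
    (h : ∀ t : ℝ, 0 < t → t ≤ 1 → (t • x + (1 - t) • y) ∈ S) : y ∈ closure S := by
  have key : ∀ t : ℝ, t • x + (1 - t) • y = y + t • (x - y) := by
    intro t
    rw [smul_sub, sub_smul, one_smul]
    abel
  set u : ℕ → ℝ := fun k => (1 : ℝ) / ((k : ℝ) + 1) with hu
  have hupos : ∀ k, 0 < u k := fun k => by positivity
  have hule : ∀ k, u k ≤ 1 := by
    intro k
    rw [hu]
    rw [div_le_one (by positivity)]
    linarith [Nat.cast_nonneg (α := ℝ) k]
  have htend : Filter.Tendsto (fun k : ℕ => (u k) • x + (1 - u k) • y)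
      Filter.atTop (nhds y) := by
    have hfe : (fun k : ℕ => (u k) • x + (1 - u k) • y)
        = fun k : ℕ => y + (u k) • (x - y) := funext fun k => key _
    rw [hfe]
    have h1 : Filter.Tendsto u Filter.atTop (nhds 0) := by
      rw [hu]
      exact tendsto_one_div_add_atTop_nhds_zero_nat
    have h2 := (h1.smul_const (x - y)).const_add y
    simpa using h2
  exact mem_closure_of_tendsto htend
    (Filter.Eventually.of_forall fun k => h (u k) (hupos k) (hule k))

end Aux
section Aux2

open SimpleLineArrangement

variable {n : ℕ}

lemma mem_U_iff (A : SimpleLineArrangement n) {x : Pt2} :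
    x ∈ A.U ↔ ∃ L ∈ A.lines, x ∈ L := by
  simp [SimpleLineArrangement.U]

lemma mem_othersU_iff (A : SimpleLineArrangement n) (L : Set Pt2) {x : Pt2} :
    x ∈ A.othersU L ↔ ∃ M ∈ A.lines, M ≠ L ∧ x ∈ M := by
  simp only [SimpleLineArrangement.othersU, Set.mem_iUnion, Set.mem_setOf_eq]
  tauto

/-- Weak sign set describing the closure of an edge. -/
def EdgeW (A : SimpleLineArrangement n) (L : Set Pt2) (x : Pt2) : Set Pt2 :=
  {y | lf L y = 0 ∧ ∀ M ∈ A.lines, M ≠ L → 0 ≤ lf M x * lf M y}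

/-- Weak sign set describing the closure of a cell. -/
def CellW (A : SimpleLineArrangement n) (x : Pt2) : Set Pt2 :=
  {y | ∀ L ∈ A.lines, 0 ≤ lf L x * lf L y}

/-- Valid base point of an edge on `L`. -/
def EBase (A : SimpleLineArrangement n) (L : Set Pt2) (x : Pt2) : Prop :=
  lf L x = 0 ∧ ∀ M ∈ A.lines, M ≠ L → lf M x ≠ 0

/-- Valid base point of a cell. -/
def CBase (A : SimpleLineArrangement n) (x : Pt2) : Prop :=
  ∀ L ∈ A.lines, lf L x ≠ 0

lemma ebase_mem_diff {A : SimpleLineArrangement n} {L : Set Pt2} (hL : L ∈ A.lines) {x : Pt2} :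
    x ∈ L \ A.othersU L ↔ EBase A L x := by
  constructor
  · rintro ⟨hx1, hx2⟩
    refine ⟨(mem_iff_lf (A.isLine L hL)).1 hx1, fun M hM hML h0 => ?_⟩
    exact hx2 ((mem_othersU_iff A L).2 ⟨M, hM, hML, (mem_iff_lf (A.isLine M hM)).2 h0⟩)
  · rintro ⟨h1, h2⟩
    refine ⟨(mem_iff_lf (A.isLine L hL)).2 h1, fun hx => ?_⟩
    rcases (mem_othersU_iff A L).1 hx with ⟨M, hM, hML, hxM⟩
    exact h2 M hM hML ((mem_iff_lf (A.isLine M hM)).1 hxM)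

lemma cbase_mem_compl {A : SimpleLineArrangement n} {x : Pt2} :
    x ∈ A.Uᶜ ↔ CBase A x := by
  constructor
  · intro hx L hL h0
    exact hx ((mem_U_iff A).2 ⟨L, hL, (mem_iff_lf (A.isLine L hL)).2 h0⟩)
  · intro h hx
    rcases (mem_U_iff A).1 hx with ⟨L, hL, hxL⟩
    exact h L hL ((mem_iff_lf (A.isLine L hL)).1 hxL)

lemma cc_compl (A : SimpleLineArrangement n) {x : Pt2} (hx : x ∈ A.Uᶜ) :
    connectedComponentIn A.Uᶜ x = {y | ∀ L ∈ A.lines, 0 < lf L x * lf L y} := by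
  have hxb : CBase A x := cbase_mem_compl.1 hx
  apply Set.Subset.antisymm
  · intro y hy L hL
    refine sameSide_of_preconnected isPreconnected_connectedComponentIn (lf L)
      (continuous_lf L) (fun z hz h0 => ?_) (mem_connectedComponentIn hx) hy
    exact (cbase_mem_compl.1 (connectedComponentIn_subset A.Uᶜ x hz)) L hL h0
  · apply IsPreconnected.subset_connectedComponentIn
    · refine Convex.isPreconnected ?_
      intro y hy z hz s t hs ht hst
      intro L hL
      rw [lf_combo L y z s t hst]
      exact pos_combo (hy L hL) (hz L hL) hs ht hst
    · intro L hL
      exact mul_self_pos.2 (hxb L hL)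
    · intro y hy
      refine cbase_mem_compl.2 fun L hL h0 => ?_
      have := hy L hL
      rw [h0, mul_zero] at this
      exact lt_irrefl _ this

lemma closure_cell (A : SimpleLineArrangement n) {x : Pt2} (hx : CBase A x) :
    closure {y | ∀ L ∈ A.lines, 0 < lf L x * lf L y} = CellW A x := by
  apply Set.Subset.antisymm
  · apply closure_minimal
    · intro y hy L hL
      exact (hy L hL).le
    · have he : CellW A x = ⋂ L ∈ (A.lines : Set (Set Pt2)), {y | 0 ≤ lf L x * lf L y} := by
        ext y; simp [CellW]
      rw [he]
      exact isClosed_biInter fun L _ =>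
        isClosed_le continuous_const (continuous_const.mul (continuous_lf L))
  · intro y hy
    apply mem_closure_segment
    intro t ht ht1 L hL
    rw [lf_combo L x y t (1 - t) (by ring)]
    have h1 : 0 < lf L x * lf L x := mul_self_pos.2 (hx L hL)
    have h2 : 0 ≤ lf L x * lf L y := hy L hL
    nlinarith

lemma cc_line (A : SimpleLineArrangement n) {L : Set Pt2} (hL : L ∈ A.lines) {x : Pt2}
    (hx : x ∈ L \ A.othersU L) :
    connectedComponentIn (L \ A.othersU L) x
      = {y | lf L y = 0 ∧ ∀ M ∈ A.lines, M ≠ L → 0 < lf M x * lf M y} := by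
  have hxb : EBase A L x := (ebase_mem_diff hL).1 hx
  apply Set.Subset.antisymm
  · intro y hy
    have hysub := connectedComponentIn_subset (L \ A.othersU L) x hy
    have hyb : EBase A L ((y : Pt2)) := (ebase_mem_diff hL).1 hysub
    refine ⟨hyb.1, fun M hM hML => ?_⟩
    refine sameSide_of_preconnected isPreconnected_connectedComponentIn (lf M)
      (continuous_lf M) (fun z hz h0 => ?_) (mem_connectedComponentIn hx) hy
    exact ((ebase_mem_diff hL).1 (connectedComponentIn_subset _ x hz)).2 M hM hML h0
  · apply IsPreconnected.subset_connectedComponentIn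
    · refine Convex.isPreconnected ?_
      intro y hy z hz s t hs ht hst
      refine ⟨?_, fun M hM hML => ?_⟩
      · rw [lf_combo L y z s t hst, hy.1, hz.1]; ring
      · rw [lf_combo M y z s t hst]
        exact pos_combo (hy.2 M hM hML) (hz.2 M hM hML) hs ht hst
    · exact ⟨hxb.1, fun M hM hML => mul_self_pos.2 (hxb.2 M hM hML)⟩
    · intro y hy
      refine (ebase_mem_diff hL).2 ⟨hy.1, fun M hM hML h0 => ?_⟩
      have := hy.2 M hM hML
      rw [h0, mul_zero] at this
      exact lt_irrefl _ this

lemma closure_line (A : SimpleLineArrangement n) {L : Set Pt2} (hL : L ∈ A.lines) {x : Pt2}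
    (hx : EBase A L x) :
    closure {y | lf L y = 0 ∧ ∀ M ∈ A.lines, M ≠ L → 0 < lf M x * lf M y} = EdgeW A L x := by
  apply Set.Subset.antisymm
  · apply closure_minimal
    · intro y hy
      exact ⟨hy.1, fun M hM hML => (hy.2 M hM hML).le⟩
    · have he : EdgeW A L x = {y : Pt2 | lf L y = 0} ∩
          ⋂ M ∈ (A.lines : Set (Set Pt2)), {y | M ≠ L → 0 ≤ lf M x * lf M y} := by
        ext y; simp [EdgeW]
      rw [he]
      refine IsClosed.inter (isClosed_eq (continuous_lf L) continuous_const) ?_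
      refine isClosed_biInter fun M _ => ?_
      by_cases hML : M ≠ L
      · have : {y : Pt2 | M ≠ L → 0 ≤ lf M x * lf M y} = {y | 0 ≤ lf M x * lf M y} := by
          ext y; simp [hML]
        rw [this]
        exact isClosed_le continuous_const (continuous_const.mul (continuous_lf M))
      · have : {y : Pt2 | M ≠ L → 0 ≤ lf M x * lf M y} = Set.univ := by
          ext y; simp; tauto
        rw [this]; exact isClosed_univ
  · intro y hy
    apply mem_closure_segment
    intro t ht ht1
    refine ⟨?_, fun M hM hML => ?_⟩
    · rw [lf_combo L x y t (1 - t) (by ring), hx.1, hy.1]; ring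
    · rw [lf_combo M x y t (1 - t) (by ring)]
      have h1 : 0 < lf M x * lf M x := mul_self_pos.2 (hx.2 M hM hML)
      have h2 : 0 ≤ lf M x * lf M y := hy.2 M hM hML
      nlinarith

lemma isCell_iff (A : SimpleLineArrangement n) {C : Set Pt2} :
    A.IsCell C ↔ ∃ x, CBase A x ∧ C = CellW A x := by
  constructor
  · rintro ⟨x, hx, rfl⟩
    exact ⟨x, cbase_mem_compl.1 hx, by rw [cc_compl A hx, closure_cell A (cbase_mem_compl.1 hx)]⟩
  · rintro ⟨x, hx, rfl⟩
    refine ⟨x, cbase_mem_compl.2 hx, ?_⟩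
    rw [cc_compl A (cbase_mem_compl.2 hx), closure_cell A hx]

lemma isEdge_iff (A : SimpleLineArrangement n) {E : Set Pt2} :
    A.IsEdge E ↔ ∃ L ∈ A.lines, ∃ x, EBase A L x ∧ E = EdgeW A L x := by
  constructor
  · rintro ⟨L, hL, x, hx, rfl⟩
    exact ⟨L, hL, x, (ebase_mem_diff hL).1 hx,
      by rw [cc_line A hL hx, closure_line A hL ((ebase_mem_diff hL).1 hx)]⟩
  · rintro ⟨L, hL, x, hx, rfl⟩
    refine ⟨L, hL, x, (ebase_mem_diff hL).2 hx, ?_⟩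
    rw [cc_line A hL ((ebase_mem_diff hL).2 hx), closure_line A hL hx]

lemma edgeW_subset_line (A : SimpleLineArrangement n) {L : Set Pt2} (hL : L ∈ A.lines) (x : Pt2) :
    EdgeW A L x ⊆ L := fun y hy => (mem_iff_lf (A.isLine L hL)).2 hy.1

lemma self_mem_edgeW (A : SimpleLineArrangement n) {L : Set Pt2} {x : Pt2} (hx : lf L x = 0) :
    x ∈ EdgeW A L x :=
  ⟨hx, fun M _ _ => mul_self_nonneg _⟩

lemma self_mem_cellW (A : SimpleLineArrangement n) (x : Pt2) : x ∈ CellW A x :=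
  fun L _ => mul_self_nonneg _

lemma edgeW_eq_of_sameSide {A : SimpleLineArrangement n} {L : Set Pt2} {x x' : Pt2}
    (h : ∀ M ∈ A.lines, M ≠ L → 0 < lf M x * lf M x') : EdgeW A L x = EdgeW A L x' := by
  ext y
  refine and_congr_right fun _ => ?_
  exact forall₂_congr fun M hM => forall_congr' fun hML => sign_transfer (h M hM hML)

lemma cellW_eq_of_sameSide {A : SimpleLineArrangement n} {x x' : Pt2}
    (h : ∀ M ∈ A.lines, 0 < lf M x * lf M x') : CellW A x = CellW A x' := by
  ext y
  exact forall₂_congr fun M hM => sign_transfer (h M hM)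

end Aux2
section Param

open SimpleLineArrangement

lemma quad_pos {a b : ℝ} (hab : ¬(a = 0 ∧ b = 0)) : 0 < a ^ 2 + b ^ 2 := by
  rcases lt_or_eq_of_le (by positivity : (0:ℝ) ≤ a ^ 2 + b ^ 2) with h | h
  · exact h
  · exfalso
    exact hab ⟨by nlinarith [sq_nonneg a, sq_nonneg b], by nlinarith [sq_nonneg a, sq_nonneg b]⟩

lemma perp_decomp {a b u w : ℝ} (h : a * u + b * w = 0) (hab : ¬(a = 0 ∧ b = 0)) :
    ∃ s, u = s * (-b) ∧ w = s * a := by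
  have hq := quad_pos hab
  refine ⟨(a * w - b * u) / (a ^ 2 + b ^ 2), ?_, ?_⟩
  · field_simp
    linear_combination a * h
  · field_simp
    linear_combination b * h

/-- Parametrization of a line through `p₀` with direction `d`. -/
def ep (p₀ d : Pt2) (t : ℝ) : Pt2 := p₀ + t • d

/-- Parameter of the intersection of `M` with the parametrized line. -/
noncomputable def tv (M : Set Pt2) (p₀ d : Pt2) : ℝ := -(lf M p₀) / dlf M d

variable {n : ℕ} {A : SimpleLineArrangement n} {L : Set Pt2}
variable {p₀ d : Pt2}

lemma lf_ep (M : Set Pt2) (t : ℝ) : lf M (ep p₀ d t) = lf M p₀ + t * dlf M d :=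
  lf_add_smul M p₀ d t

lemma ep_combo (p₀ d : Pt2) {s t : ℝ} (hst : s + t = 1) (r u : ℝ) :
    ep p₀ d (s * r + t * u) = s • ep p₀ d r + t • ep p₀ d u := by
  funext i
  simp only [ep, Pi.add_apply, Pi.smul_apply, smul_eq_mul]
  have : t = 1 - s := by linarith
  subst this; ring

section withHyp

variable (hL : L ∈ A.lines) (hp₀ : lf L p₀ = 0) (hd : dlf L d = 0) (hdne : d ≠ 0)

include hp₀ hd in
lemma lf_L_ep (t : ℝ) : lf L (ep p₀ d t) = 0 := by
  rw [lf_ep, hp₀, hd]; ring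

include hL hp₀ hd in
lemma ep_mem_L (t : ℝ) : ep p₀ d t ∈ L :=
  (mem_iff_lf (A.isLine L hL)).2 (lf_L_ep hp₀ hd t)

include hdne in
lemma ep_injective : Function.Injective (ep p₀ d) := by
  intro t t' h
  rcases Function.ne_iff.1 hdne with ⟨i, hi⟩
  have := congrFun h i
  simp only [ep, Pi.add_apply, Pi.smul_apply, smul_eq_mul] at this
  have h2 : t * d i = t' * d i := by linarith
  exact mul_right_cancel₀ hi h2

include hL hp₀ hd hdne in
lemma ep_surj {x : Pt2} (hx : x ∈ L) : ∃ t, x = ep p₀ d t := by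
  set a := (co L).1 with ha
  set b := (co L).2.1 with hb
  have hab : ¬(a = 0 ∧ b = 0) := co_ne (A.isLine L hL)
  have hxl : lf L x = 0 := (mem_iff_lf (A.isLine L hL)).1 hx
  have h1 : a * (x 0 - p₀ 0) + b * (x 1 - p₀ 1) = 0 := by
    simp only [lf] at hxl hp₀
    linear_combination hxl - hp₀
  have h2 : a * d 0 + b * d 1 = 0 := by simpa [dlf] using hd
  rcases perp_decomp h1 hab with ⟨s, hs0, hs1⟩
  rcases perp_decomp h2 hab with ⟨s', hs'0, hs'1⟩
  have hs'ne : s' ≠ 0 := by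
    rintro rfl
    apply hdne
    funext i
    fin_cases i
    · simpa using hs'0
    · simpa using hs'1
  refine ⟨s / s', ?_⟩
  funext i
  fin_cases i
  · show x 0 = p₀ 0 + (s / s') * d 0
    rw [hs'0]
    field_simp
    linear_combination hs0
  · show x 1 = p₀ 1 + (s / s') * d 1
    rw [hs'1]
    field_simp
    linear_combination hs1

include hL hp₀ hd hdne in
lemma slope_ne {M : Set Pt2} (hM : M ∈ A.lines) (hML : M ≠ L) : dlf M d ≠ 0 := by
  intro h0
  rcases A.pair_inter L hL M hM (Ne.symm hML) with ⟨p, hp, hpu⟩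
  by_cases hc : lf M p₀ = 0
  · have h01 : ep p₀ d 0 = ep p₀ d 1 := by
      have m0 : ep p₀ d (0:ℝ) ∈ L ∩ M :=
        ⟨ep_mem_L hL hp₀ hd 0, (mem_iff_lf (A.isLine M hM)).2 (by rw [lf_ep, hc, h0]; ring)⟩
      have m1 : ep p₀ d (1:ℝ) ∈ L ∩ M :=
        ⟨ep_mem_L hL hp₀ hd 1, (mem_iff_lf (A.isLine M hM)).2 (by rw [lf_ep, hc, h0]; ring)⟩
      rw [hpu _ m0, hpu _ m1]
    have := ep_injective hdne h01
    norm_num at this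
  · rcases ep_surj hL hp₀ hd hdne hp.1 with ⟨t, rfl⟩
    have : lf M (ep p₀ d t) = 0 := (mem_iff_lf (A.isLine M hM)).1 hp.2
    rw [lf_ep, h0] at this
    exact hc (by linarith)

include hL hp₀ hd hdne in
lemma lf_ep_tv {M : Set Pt2} (hM : M ∈ A.lines) (hML : M ≠ L) (t : ℝ) :
    lf M (ep p₀ d t) = dlf M d * (t - tv M p₀ d) := by
  have hs := slope_ne hL hp₀ hd hdne hM hML
  rw [lf_ep, tv]
  field_simp
  ring

include hL hp₀ hd hdne in
lemma ep_tv_mem {M : Set Pt2} (hM : M ∈ A.lines) (hML : M ≠ L) :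
    ep p₀ d (tv M p₀ d) ∈ L ∩ M := by
  refine ⟨ep_mem_L hL hp₀ hd _, (mem_iff_lf (A.isLine M hM)).2 ?_⟩
  rw [lf_ep_tv hL hp₀ hd hdne hM hML]
  ring

include hL hp₀ hd hdne in
lemma eq_tv_of_mem {M : Set Pt2} (hM : M ∈ A.lines) (hML : M ≠ L) {x : Pt2}
    (hx : x ∈ L ∩ M) : x = ep p₀ d (tv M p₀ d) := by
  rcases ep_surj hL hp₀ hd hdne hx.1 with ⟨t, rfl⟩
  have h0 : lf M (ep p₀ d t) = 0 := (mem_iff_lf (A.isLine M hM)).1 hx.2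
  rw [lf_ep_tv hL hp₀ hd hdne hM hML] at h0
  have hs := slope_ne hL hp₀ hd hdne hM hML
  have : t = tv M p₀ d := by
    rcases mul_eq_zero.1 h0 with h | h
    · exact absurd h hs
    · linarith
  rw [this]

include hL hp₀ hd hdne in
lemma tv_inj {M N : Set Pt2} (hM : M ∈ A.lines) (hML : M ≠ L) (hN : N ∈ A.lines)
    (hNL : N ≠ L) (hMN : M ≠ N) : tv M p₀ d ≠ tv N p₀ d := by
  intro h
  refine A.no_three L hL M hM N hN (Ne.symm hML) hMN (Ne.symm hNL) ?_
  refine ⟨ep p₀ d (tv M p₀ d), (ep_tv_mem hL hp₀ hd hdne hM hML).1,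
    (ep_tv_mem hL hp₀ hd hdne hM hML).2, ?_⟩
  rw [h]
  exact (ep_tv_mem hL hp₀ hd hdne hN hNL).2

end withHyp

open Classical in
/-- Parameters of the vertices on the parametrized line. -/
noncomputable def TT (A : SimpleLineArrangement n) (L : Set Pt2) (p₀ d : Pt2) : Finset ℝ :=
  (A.lines.erase L).image (fun M => tv M p₀ d)

lemma mem_TT {t : ℝ} :
    t ∈ TT A L p₀ d ↔ ∃ M ∈ A.lines, M ≠ L ∧ tv M p₀ d = t := by
  classical
  simp only [TT, Finset.mem_image, Finset.mem_erase]
  constructor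
  · rintro ⟨M, hM, rfl⟩
    exact ⟨M, hM.2, hM.1, rfl⟩
  · rintro ⟨M, hM, hML, rfl⟩
    exact ⟨M, ⟨hML, hM⟩, rfl⟩

section withHyp2

variable (hL : L ∈ A.lines) (hp₀ : lf L p₀ = 0) (hd : dlf L d = 0) (hdne : d ≠ 0)

include hL hp₀ hd hdne in
lemma TT_card : (TT A L p₀ d).card = n - 1 := by
  classical
  rw [TT, Finset.card_image_of_injOn, Finset.card_erase_of_mem hL, A.card_eq]
  intro M hM N hN hMN
  by_contra hne
  rw [Finset.mem_coe, Finset.mem_erase] at hM hN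
  exact tv_inj hL hp₀ hd hdne hM.2 hM.1 hN.2 hN.1 hne hMN

include hL hp₀ hd hdne in
lemma verticesOn_eq : A.verticesOn L = ep p₀ d '' ↑(TT A L p₀ d) := by
  ext v
  constructor
  · rintro ⟨⟨P, hP, Q, hQ, hPQ, hvP, hvQ⟩, hvL⟩
    by_cases hPL : P = L
    · have hQL : Q ≠ L := fun h => hPQ (hPL.trans h.symm)
      exact ⟨tv Q p₀ d, mem_TT.2 ⟨Q, hQ, hQL, rfl⟩,
        (eq_tv_of_mem hL hp₀ hd hdne hQ hQL ⟨hvL, hvQ⟩).symm⟩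
    · by_cases hQL : Q = L
      · exact ⟨tv P p₀ d, mem_TT.2 ⟨P, hP, hPL, rfl⟩,
          (eq_tv_of_mem hL hp₀ hd hdne hP hPL ⟨hvL, hvP⟩).symm⟩
      · exfalso
        exact A.no_three L hL P hP Q hQ (Ne.symm hPL) hPQ (Ne.symm hQL) ⟨v, hvL, hvP, hvQ⟩
  · rintro ⟨t, ht, rfl⟩
    rcases mem_TT.1 ht with ⟨M, hM, hML, rfl⟩
    have hmem := ep_tv_mem hL hp₀ hd hdne hM hML
    exact ⟨⟨L, hL, M, hM, Ne.symm hML, hmem⟩, hmem.1⟩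

include hL hp₀ hd hdne in
lemma isEndVertex_iff {t₀ : ℝ} (ht₀ : t₀ ∈ TT A L p₀ d) :
    A.IsEndVertex L (ep p₀ d t₀) ↔
      ((∀ t ∈ TT A L p₀ d, t₀ ≤ t) ∨ (∀ t ∈ TT A L p₀ d, t ≤ t₀)) := by
  have hV := verticesOn_eq hL hp₀ hd hdne
  have hinj : Function.Injective (ep p₀ d) := ep_injective hdne
  have hdiff : A.verticesOn L \ {ep p₀ d t₀} = ep p₀ d '' (↑(TT A L p₀ d) \ {t₀}) := by
    rw [hV, ← Set.image_singleton, ← Set.image_diff hinj]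
  have haff : ∀ S : Set ℝ, ep p₀ d '' (convexHull ℝ S) = convexHull ℝ (ep p₀ d '' S) := by
    intro S
    have hepeq : ep p₀ d = ⇑(AffineMap.lineMap p₀ (p₀ + d) : ℝ →ᵃ[ℝ] Pt2) := by
      funext t
      simp [ep, AffineMap.lineMap_apply]
      abel
    rw [hepeq]
    exact AffineMap.image_convexHull _ _
  constructor
  · intro hEnd
    by_contra hcon
    push_neg at hcon
    rcases hcon with ⟨⟨ta, hta, htalt⟩, ⟨tb, htb, htblt⟩⟩
    apply hEnd.2
    rw [hdiff, ← haff]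
    set u := (t₀ - ta) / (tb - ta) with hu
    have htab : ta < tb := lt_trans htalt htblt
    have hu0 : 0 < u := by apply div_pos <;> linarith
    have hu1 : u < 1 := by
      rw [hu, div_lt_one (by linarith)]
      linarith
    have hcombo : (1 - u) * ta + u * tb = t₀ := by
      have hne : tb - ta ≠ 0 := ne_of_gt (by linarith)
      rw [hu]; field_simp; ring
    have hmemA : ta ∈ (↑(TT A L p₀ d) \ {t₀} : Set ℝ) := by
      refine ⟨Finset.mem_coe.2 hta, ?_⟩
      intro h
      rw [Set.mem_singleton_iff] at h
      linarith
    have hmemB : tb ∈ (↑(TT A L p₀ d) \ {t₀} : Set ℝ) := by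
      refine ⟨Finset.mem_coe.2 htb, ?_⟩
      intro h
      rw [Set.mem_singleton_iff] at h
      linarith
    have hmem : (1 - u) * ta + u * tb ∈ convexHull ℝ (↑(TT A L p₀ d) \ {t₀}) :=
      (convex_convexHull ℝ _) (subset_convexHull ℝ _ hmemA) (subset_convexHull ℝ _ hmemB)
        (by linarith) hu0.le (by ring)
    exact ⟨_, hmem, by rw [hcombo]⟩
  · intro hext
    constructor
    · rw [hV]
      exact ⟨t₀, ht₀, rfl⟩
    · intro hmem
      rw [hdiff, ← haff] at hmem
      rcases hmem with ⟨s, hs, heq⟩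
      have hst : t₀ = s := hinj heq.symm
      subst hst
      rcases hext with h | h
      · have hsub : convexHull ℝ (↑(TT A L p₀ d) \ {t₀}) ⊆ Set.Ioi t₀ := by
          apply convexHull_min _ (convex_Ioi t₀)
          rintro t ⟨ht1, ht2⟩
          simp only [Set.mem_singleton_iff] at ht2
          exact lt_of_le_of_ne (h t ht1) (Ne.symm ht2)
        exact lt_irrefl t₀ (hsub hs)
      · have hsub : convexHull ℝ (↑(TT A L p₀ d) \ {t₀}) ⊆ Set.Iio t₀ := by
          apply convexHull_min _ (convex_Iio t₀)
          rintro t ⟨ht1, ht2⟩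
          simp only [Set.mem_singleton_iff] at ht2
          exact lt_of_le_of_ne (h t ht1) ht2
        exact lt_irrefl t₀ (hsub hs)

end withHyp2

end Param
section Edges

open SimpleLineArrangement

variable {n : ℕ} {A : SimpleLineArrangement n} {L : Set Pt2} {p₀ d : Pt2}

/-! ### reversal lemmas -/

lemma dlf_neg (M : Set Pt2) (d : Pt2) : dlf M (-d) = - dlf M d := by
  simp only [dlf, Pi.neg_apply]; ring

lemma ep_neg (p₀ d : Pt2) (t : ℝ) : ep p₀ (-d) t = ep p₀ d (-t) := by
  funext i
  simp only [ep, Pi.add_apply, Pi.smul_apply, Pi.neg_apply, smul_eq_mul]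
  ring

lemma tv_neg (M : Set Pt2) (p₀ d : Pt2) : tv M p₀ (-d) = - tv M p₀ d := by
  rw [tv, tv, dlf_neg, div_neg]

lemma mem_TT_neg {t : ℝ} : t ∈ TT A L p₀ (-d) ↔ -t ∈ TT A L p₀ d := by
  rw [mem_TT, mem_TT]
  constructor
  · rintro ⟨M, hM, hML, ht⟩
    exact ⟨M, hM, hML, by rw [tv_neg] at ht; linarith⟩
  · rintro ⟨M, hM, hML, ht⟩
    exact ⟨M, hM, hML, by rw [tv_neg, ht, neg_neg]⟩

/-- Canonical direction vector of a line. -/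
noncomputable def dir (M : Set Pt2) : Pt2 := ![-(co M).2.1, (co M).1]

lemma dlf_dir (M : Set Pt2) : dlf M (dir M) = 0 := by
  simp only [dlf, dir]
  norm_num
  ring

lemma dir_ne {M : Set Pt2} (h : IsLine M) : dir M ≠ 0 := by
  intro h0
  refine co_ne h ⟨?_, ?_⟩
  · have := congrFun h0 1
    simpa [dir] using this
  · have := congrFun h0 0
    simpa [dir] using this

lemma continuous_ep (p₀ d : Pt2) : Continuous (ep p₀ d) := by
  unfold ep
  exact continuous_const.add (continuous_id.smul continuous_const)

/-- The norm is at least the absolute value of a coordinate. -/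
lemma unbounded_of_ray {S : Set Pt2} (hdne : d ≠ 0) {c : ℝ}
    (h : ∀ u : ℝ, c ≤ u → ep p₀ d u ∈ S) : ¬ Bornology.IsBounded S := by
  intro hb
  rcases isBounded_iff_forall_norm_le.1 hb with ⟨R, hR⟩
  rcases Function.ne_iff.1 hdne with ⟨i, hi'⟩
  have hi : d i ≠ 0 := by simpa using hi'
  set u := max c ((R + |p₀ i| + 1) / |d i|) with hu
  have h1 : c ≤ u := le_max_left _ _
  have h2 : (R + |p₀ i| + 1) / |d i| ≤ u := le_max_right _ _
  have hdi : 0 < |d i| := abs_pos.2 hi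
  have h3 : R + |p₀ i| + 1 ≤ u * |d i| := by
    rw [div_le_iff₀ hdi] at h2
    linarith
  have h4 : ‖ep p₀ d u‖ ≤ R := hR _ (h u h1)
  have h5 : |(ep p₀ d u) i| ≤ ‖ep p₀ d u‖ := by
    have := norm_le_pi_norm (ep p₀ d u) i
    simpa using this
  have h6 : |(ep p₀ d u) i| = |p₀ i + u * d i| := by
    simp only [ep, Pi.add_apply, Pi.smul_apply, smul_eq_mul]
  have h7 : u * |d i| - |p₀ i| ≤ |p₀ i + u * d i| := by
    have habs : |u * d i| - |p₀ i| ≤ |p₀ i + u * d i| := by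
      have := abs_add_le (p₀ i + u * d i) (-(p₀ i))
      simp only [abs_neg] at this
      have h' : |u * d i| ≤ |p₀ i + u * d i| + |p₀ i| := by
        calc |u * d i| = |p₀ i + u * d i + -(p₀ i)| := by ring_nf
          _ ≤ |p₀ i + u * d i| + |p₀ i| := this
      linarith
    rw [abs_mul] at habs
    have hR0 : 0 ≤ R := le_trans (norm_nonneg _) h4
    have hu0 : 0 ≤ u := by nlinarith [abs_nonneg (p₀ i)]
    rw [abs_of_nonneg hu0] at habs
    exact habs
  rw [h6] at h5
  linarith

open Classical in
/-- Midpoint-style parameter strictly on the plus side of `t₀`, before any other vertex. -/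
noncomputable def nextP (A : SimpleLineArrangement n) (L : Set Pt2) (p₀ d : Pt2) (t₀ : ℝ) : ℝ :=
  if h : ((TT A L p₀ d).filter (fun t => t₀ < t)).Nonempty
  then (t₀ + ((TT A L p₀ d).filter (fun t => t₀ < t)).min' h) / 2
  else t₀ + 1

/-- The plus-side edge of the parametrized line at parameter `t₀`. -/
noncomputable def EdgePlus (A : SimpleLineArrangement n) (L : Set Pt2) (p₀ d : Pt2) (t₀ : ℝ) :
    Set Pt2 :=
  EdgeW A L (ep p₀ d (nextP A L p₀ d t₀))

lemma nextP_gt (t₀ : ℝ) : t₀ < nextP A L p₀ d t₀ := by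
  classical
  rw [nextP]
  split_ifs with h
  · have h2 := Finset.mem_filter.1 ((Finset.filter (fun t => t₀ < t) (TT A L p₀ d)).min'_mem h)
    linarith [h2.2]
  · linarith

lemma nextP_sep {t₀ : ℝ} {t : ℝ} (ht : t ∈ TT A L p₀ d) :
    t ≤ t₀ ∨ nextP A L p₀ d t₀ < t := by
  classical
  rcases le_or_gt t t₀ with h | h
  · exact Or.inl h
  · right
    have hne : ((TT A L p₀ d).filter (fun t => t₀ < t)).Nonempty :=
      ⟨t, Finset.mem_filter.2 ⟨ht, h⟩⟩
    have hmin : ((TT A L p₀ d).filter (fun t => t₀ < t)).min' hne ≤ t :=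
      Finset.min'_le _ _ (Finset.mem_filter.2 ⟨ht, h⟩)
    have hminmem := Finset.mem_filter.1
      (((TT A L p₀ d).filter (fun t => t₀ < t)).min'_mem hne)
    rw [nextP, dif_pos hne]
    linarith [hminmem.2]

lemma nextP_notMem (t₀ : ℝ) : nextP A L p₀ d t₀ ∉ TT A L p₀ d := by
  intro h
  rcases nextP_sep (t₀ := t₀) h with h' | h'
  · linarith [nextP_gt (A := A) (L := L) (p₀ := p₀) (d := d) t₀]
  · exact lt_irrefl _ h'

section withHyp

variable (hL : L ∈ A.lines) (hp₀ : lf L p₀ = 0) (hd : dlf L d = 0) (hdne : d ≠ 0)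

include hL hp₀ hd hdne in
lemma lf_ne_of_notMem_TT {s : ℝ} (hs : s ∉ TT A L p₀ d) {M : Set Pt2} (hM : M ∈ A.lines)
    (hML : M ≠ L) : lf M (ep p₀ d s) ≠ 0 := by
  rw [lf_ep_tv hL hp₀ hd hdne hM hML]
  intro h0
  rcases mul_eq_zero.1 h0 with h | h
  · exact slope_ne hL hp₀ hd hdne hM hML h
  · exact hs (mem_TT.2 ⟨M, hM, hML, by linarith⟩)

include hL hp₀ hd hdne in
lemma ebase_of_notMem_TT {s : ℝ} (hs : s ∉ TT A L p₀ d) : EBase A L (ep p₀ d s) :=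
  ⟨lf_L_ep hp₀ hd s, fun M hM hML => lf_ne_of_notMem_TT hL hp₀ hd hdne hs hM hML⟩

include hL hp₀ hd hdne in
lemma isEdge_edgePlus (t₀ : ℝ) : A.IsEdge (EdgePlus A L p₀ d t₀) :=
  (isEdge_iff A).2 ⟨L, hL, _, ebase_of_notMem_TT hL hp₀ hd hdne (nextP_notMem t₀), rfl⟩

include hL hp₀ hd hdne in
lemma mem_edgeW_param_iff {s u : ℝ} (hs : s ∉ TT A L p₀ d) :
    ep p₀ d u ∈ EdgeW A L (ep p₀ d s) ↔
      ∀ M ∈ A.lines, M ≠ L → 0 ≤ (s - tv M p₀ d) * (u - tv M p₀ d) := by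
  constructor
  · rintro ⟨-, h⟩ M hM hML
    have := h M hM hML
    rw [lf_ep_tv hL hp₀ hd hdne hM hML, lf_ep_tv hL hp₀ hd hdne hM hML] at this
    have hsl := slope_ne hL hp₀ hd hdne hM hML
    have hsq : 0 < dlf M d * dlf M d := mul_self_pos.2 hsl
    nlinarith
  · intro h
    refine ⟨lf_L_ep hp₀ hd u, fun M hM hML => ?_⟩
    rw [lf_ep_tv hL hp₀ hd hdne hM hML, lf_ep_tv hL hp₀ hd hdne hM hML]
    have := h M hM hML
    nlinarith [mul_self_nonneg (dlf M d)]

include hL hp₀ hd hdne in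
lemma mem_line_edgeW {y : Pt2} {x : Pt2} (hy : y ∈ EdgeW A L x) : ∃ u, y = ep p₀ d u :=
  ep_surj hL hp₀ hd hdne ((mem_iff_lf (A.isLine L hL)).2 hy.1)

include hL hp₀ hd hdne in
lemma vertex_mem_edgePlus {t₀ : ℝ} (ht₀ : t₀ ∈ TT A L p₀ d) :
    ep p₀ d t₀ ∈ EdgePlus A L p₀ d t₀ := by
  rw [EdgePlus, mem_edgeW_param_iff hL hp₀ hd hdne (nextP_notMem t₀)]
  intro M hM hML
  have hsep : tv M p₀ d ≤ t₀ ∨ nextP A L p₀ d t₀ < tv M p₀ d :=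
    nextP_sep (mem_TT.2 ⟨M, hM, hML, rfl⟩)
  have hgt := nextP_gt (A := A) (L := L) (p₀ := p₀) (d := d) t₀
  rcases hsep with h | h
  · have h1 : 0 ≤ nextP A L p₀ d t₀ - tv M p₀ d := by linarith
    have h2 : 0 ≤ t₀ - tv M p₀ d := by linarith
    positivity
  · have h1 : nextP A L p₀ d t₀ - tv M p₀ d < 0 := by linarith
    have h2 : t₀ - tv M p₀ d < 0 := by linarith
    nlinarith

include hL hp₀ hd hdne in
lemma edgePlus_bounded {t₀ : ℝ}
    (h : ((TT A L p₀ d).filter (fun t => t₀ < t)).Nonempty) (ht₀ : t₀ ∈ TT A L p₀ d) :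
    Bornology.IsBounded (EdgePlus A L p₀ d t₀) := by
  classical
  set m := ((TT A L p₀ d).filter (fun t => t₀ < t)).min' h with hm
  have hmmem := Finset.mem_filter.1 (((TT A L p₀ d).filter (fun t => t₀ < t)).min'_mem h)
  have hnext : nextP A L p₀ d t₀ = (t₀ + m) / 2 := by rw [nextP, dif_pos h]
  have hgt := nextP_gt (A := A) (L := L) (p₀ := p₀) (d := d) t₀
  have hlt : nextP A L p₀ d t₀ < m := by rw [hnext]; linarith [hmmem.2]
  have hsub : EdgePlus A L p₀ d t₀ ⊆ ep p₀ d '' Set.Icc t₀ m := by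
    intro y hy
    rcases mem_line_edgeW hL hp₀ hd hdne hy with ⟨u, rfl⟩
    rw [EdgePlus, mem_edgeW_param_iff hL hp₀ hd hdne (nextP_notMem t₀)] at hy
    rcases mem_TT.1 ht₀ with ⟨M₀, hM₀, hM₀L, htv₀⟩
    rcases mem_TT.1 hmmem.1 with ⟨M₁, hM₁, hM₁L, htv₁⟩
    have c0 := hy M₀ hM₀ hM₀L
    have c1 := hy M₁ hM₁ hM₁L
    rw [htv₀] at c0
    rw [htv₁] at c1
    refine ⟨u, ⟨?_, ?_⟩, rfl⟩
    · nlinarith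
    · nlinarith
  exact (((isCompact_Icc).image (continuous_ep p₀ d)).isBounded).subset hsub

include hL hp₀ hd hdne in
lemma edgePlus_ray {t₀ : ℝ}
    (h : ¬ ((TT A L p₀ d).filter (fun t => t₀ < t)).Nonempty) :
    ∀ u : ℝ, t₀ ≤ u → ep p₀ d u ∈ EdgePlus A L p₀ d t₀ := by
  intro u hu
  rw [EdgePlus, mem_edgeW_param_iff hL hp₀ hd hdne (nextP_notMem t₀)]
  intro M hM hML
  have htM : tv M p₀ d ∈ TT A L p₀ d := mem_TT.2 ⟨M, hM, hML, rfl⟩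
  have hle : tv M p₀ d ≤ t₀ := by
    by_contra hgt
    push_neg at hgt
    exact h ⟨_, Finset.mem_filter.2 ⟨htM, hgt⟩⟩
  have hgt := nextP_gt (A := A) (L := L) (p₀ := p₀) (d := d) t₀
  have h1 : 0 ≤ nextP A L p₀ d t₀ - tv M p₀ d := by linarith
  have h2 : 0 ≤ u - tv M p₀ d := by linarith
  positivity

include hL hp₀ hd hdne in
lemma edgePlus_unbounded {t₀ : ℝ}
    (h : ¬ ((TT A L p₀ d).filter (fun t => t₀ < t)).Nonempty) :
    ¬ Bornology.IsBounded (EdgePlus A L p₀ d t₀) :=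
  unbounded_of_ray hdne (edgePlus_ray hL hp₀ hd hdne h)

include hL hp₀ hd hdne in
lemma edge_eq_plus_of_gt {t₀ s : ℝ} (ht₀ : t₀ ∈ TT A L p₀ d) (hs : s ∉ TT A L p₀ d)
    (hgt : t₀ < s) (hv : ep p₀ d t₀ ∈ EdgeW A L (ep p₀ d s)) :
    EdgeW A L (ep p₀ d s) = EdgePlus A L p₀ d t₀ := by
  apply edgeW_eq_of_sameSide
  intro M hM hML
  rw [lf_ep_tv hL hp₀ hd hdne hM hML, lf_ep_tv hL hp₀ hd hdne hM hML]
  have hsl := slope_ne hL hp₀ hd hdne hM hML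
  have hsq : 0 < dlf M d * dlf M d := mul_self_pos.2 hsl
  have htM : tv M p₀ d ∈ TT A L p₀ d := mem_TT.2 ⟨M, hM, hML, rfl⟩
  have hsep := nextP_sep (t₀ := t₀) htM
  have hgtP := nextP_gt (A := A) (L := L) (p₀ := p₀) (d := d) t₀
  have key : 0 < (s - tv M p₀ d) * (nextP A L p₀ d t₀ - tv M p₀ d) := by
    rcases hsep with hle | hlt
    · have h1 : 0 < s - tv M p₀ d := by linarith
      have h2 : 0 < nextP A L p₀ d t₀ - tv M p₀ d := by linarith
      positivity
    · -- tv M > nextP > t₀ ; from hv : (s - tv)(t₀ - tv) ≥ 0 and t₀ - tv < 0 get s ≤ tv, so s < tv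
      have hmem := (mem_edgeW_param_iff hL hp₀ hd hdne hs).1 hv M hM hML
      have htlt : t₀ - tv M p₀ d < 0 := by linarith
      have hsle : s - tv M p₀ d ≤ 0 := by nlinarith
      have hsne : s ≠ tv M p₀ d := fun h => hs (h ▸ htM)
      have h1 : s - tv M p₀ d < 0 := lt_of_le_of_ne hsle (by intro h; exact hsne (by linarith))
      have h2 : nextP A L p₀ d t₀ - tv M p₀ d < 0 := by linarith
      nlinarith
  nlinarith

end withHyp

end Edges
section Vertex

open SimpleLineArrangement

variable {n : ℕ} {A : SimpleLineArrangement n} {L : Set Pt2} {p₀ d : Pt2}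

lemma ep_zero (q e : Pt2) : ep q e 0 = q := by
  funext i
  simp [ep]

lemma tv_eq_zero {P : Set Pt2} {q e : Pt2} (h : lf P q = 0) : tv P q e = 0 := by
  simp [tv, h]

lemma tv_mem_TT {M₀ : Set Pt2} (hM₀ : M₀ ∈ A.lines) (hM₀L : M₀ ≠ L) :
    tv M₀ p₀ d ∈ TT A L p₀ d := mem_TT.2 ⟨M₀, hM₀, hM₀L, rfl⟩

section withHyp

variable (hL : L ∈ A.lines) (hp₀ : lf L p₀ = 0) (hd : dlf L d = 0) (hdne : d ≠ 0)

include hL hp₀ hd hdne in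
lemma notMem_TT_of_EBase {s : ℝ} (hB : EBase A L (ep p₀ d s)) : s ∉ TT A L p₀ d := by
  intro hs
  rcases mem_TT.1 hs with ⟨M, hM, hML, htv⟩
  refine hB.2 M hM hML ?_
  rw [lf_ep_tv hL hp₀ hd hdne hM hML, htv]
  ring

include hp₀ hd hdne in
lemma edge_eq_minus_of_lt (hL : L ∈ A.lines) {t₀ s : ℝ} (ht₀ : t₀ ∈ TT A L p₀ d)
    (hs : s ∉ TT A L p₀ d) (hlt : s < t₀) (hv : ep p₀ d t₀ ∈ EdgeW A L (ep p₀ d s)) :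
    EdgeW A L (ep p₀ d s) = EdgePlus A L p₀ (-d) (-t₀) := by
  have hd' : dlf L (-d) = 0 := by rw [dlf_neg, hd, neg_zero]
  have hdne' : (-d : Pt2) ≠ 0 := neg_ne_zero.2 hdne
  have ht₀' : -t₀ ∈ TT A L p₀ (-d) := mem_TT_neg.2 (by rwa [neg_neg])
  have hs' : -s ∉ TT A L p₀ (-d) := fun h => hs (by rw [← neg_neg s]; exact mem_TT_neg.1 h)
  have hgt : -t₀ < -s := by linarith
  have hv' : ep p₀ (-d) (-t₀) ∈ EdgeW A L (ep p₀ (-d) (-s)) := by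
    rw [ep_neg, ep_neg, neg_neg, neg_neg]
    exact hv
  have := edge_eq_plus_of_gt hL hp₀ hd' hdne' ht₀' hs' hgt hv'
  rw [ep_neg, neg_neg] at this
  exact this

include hL hp₀ hd hdne in
lemma vertex_mem_edgeMinus {t₀ : ℝ} (ht₀ : t₀ ∈ TT A L p₀ d) :
    ep p₀ d t₀ ∈ EdgePlus A L p₀ (-d) (-t₀) := by
  have hd' : dlf L (-d) = 0 := by rw [dlf_neg, hd, neg_zero]
  have hdne' : (-d : Pt2) ≠ 0 := neg_ne_zero.2 hdne
  have ht₀' : -t₀ ∈ TT A L p₀ (-d) := mem_TT_neg.2 (by rwa [neg_neg])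
  have := vertex_mem_edgePlus hL hp₀ hd' hdne' ht₀'
  rw [ep_neg, neg_neg] at this
  exact this

include hL hp₀ hd hdne in
lemma edgePlus_ne_minus {M₀ : Set Pt2} (hM₀ : M₀ ∈ A.lines) (hM₀L : M₀ ≠ L) {t₀ : ℝ}
    (ht₀ : t₀ = tv M₀ p₀ d) :
    EdgePlus A L p₀ d t₀ ≠ EdgePlus A L p₀ (-d) (-t₀) := by
  intro heq
  set x := ep p₀ d (nextP A L p₀ d t₀) with hx
  have hx1 : x ∈ EdgePlus A L p₀ d t₀ := self_mem_edgeW A (lf_L_ep hp₀ hd _)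
  rw [heq] at hx1
  have hd' : dlf L (-d) = 0 := by rw [dlf_neg, hd, neg_zero]
  have hdne' : (-d : Pt2) ≠ 0 := neg_ne_zero.2 hdne
  have hxrep : x = ep p₀ (-d) (-(nextP A L p₀ d t₀)) := by rw [ep_neg, neg_neg]
  rw [hxrep, EdgePlus] at hx1
  have hcon := (mem_edgeW_param_iff hL hp₀ hd' hdne' (nextP_notMem _)).1 hx1 M₀ hM₀ hM₀L
  have htv' : tv M₀ p₀ (-d) = -t₀ := by rw [tv_neg, ht₀]
  rw [htv'] at hcon
  have h1 := nextP_gt (A := A) (L := L) (p₀ := p₀) (d := -d) (-t₀)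
  have h2 := nextP_gt (A := A) (L := L) (p₀ := p₀) (d := d) t₀
  nlinarith

end withHyp

lemma edgeW_ne_of_line {M₀ : Set Pt2} (hM₀ : M₀ ∈ A.lines) {E1 E2 x : Pt2 → Prop}
    (h1 : True) : True := trivial

lemma edge_ne_of_notMem {E1 E2 : Set Pt2} {x : Pt2} (h1 : x ∈ E1) (hx : x ∉ E2) : E1 ≠ E2 :=
  fun h => hx (h ▸ h1)

/-- The four edges at a vertex. -/
lemma edges_at
    (hL : L ∈ A.lines) (hp₀ : lf L p₀ = 0) (hd : dlf L d = 0) (hdne : d ≠ 0)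
    {M₀ : Set Pt2} (hM₀ : M₀ ∈ A.lines) (hM₀L : M₀ ≠ L)
    {e : Pt2} (he0 : dlf M₀ e = 0) (hene : e ≠ 0)
    {t₀ : ℝ} (ht₀ : t₀ = tv M₀ p₀ d) :
    {E : Set Pt2 | A.IsEdge E ∧ ep p₀ d t₀ ∈ E} =
      {EdgePlus A L p₀ d t₀, EdgePlus A L p₀ (-d) (-t₀),
       EdgePlus A M₀ (ep p₀ d t₀) e 0, EdgePlus A M₀ (ep p₀ d t₀) (-e) 0} := by
  set v := ep p₀ d t₀ with hv
  have ht₀TT : t₀ ∈ TT A L p₀ d := ht₀ ▸ tv_mem_TT hM₀ hM₀L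
  have hvM₀ : v ∈ M₀ := by
    rw [hv, ht₀]
    exact (ep_tv_mem hL hp₀ hd hdne hM₀ hM₀L).2
  have hv0 : lf M₀ v = 0 := (mem_iff_lf (A.isLine M₀ hM₀)).1 hvM₀
  have he0' : dlf M₀ (-e) = 0 := by rw [dlf_neg, he0, neg_zero]
  have hene' : (-e : Pt2) ≠ 0 := neg_ne_zero.2 hene
  have hLM₀ : L ≠ M₀ := Ne.symm hM₀L
  have h0tv : (0:ℝ) = tv L v e := (tv_eq_zero (lf_L_ep hp₀ hd t₀)).symm
  have h0tv' : (0:ℝ) = tv L v (-e) := (tv_eq_zero (lf_L_ep hp₀ hd t₀)).symm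
  have h0TT : (0:ℝ) ∈ TT A M₀ v e := h0tv ▸ tv_mem_TT hL hLM₀
  have h0TT' : (0:ℝ) ∈ TT A M₀ v (-e) := h0tv' ▸ tv_mem_TT hL hLM₀
  ext E
  simp only [Set.mem_setOf_eq, Set.mem_insert_iff, Set.mem_singleton_iff]
  constructor
  · rintro ⟨hE, hvE⟩
    rcases (isEdge_iff A).1 hE with ⟨P, hP, x, hxB, rfl⟩
    have hvP : v ∈ P := (mem_iff_lf (A.isLine P hP)).2 hvE.1
    by_cases hPL : P = L
    · subst hPL
      rcases ep_surj hP hp₀ hd hdne ((mem_iff_lf (A.isLine P hP)).2 hxB.1) with ⟨s, rfl⟩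
      have hs : s ∉ TT A P p₀ d := notMem_TT_of_EBase hP hp₀ hd hdne hxB
      have hst : s ≠ t₀ := fun h => hs (h ▸ ht₀TT)
      rcases lt_or_gt_of_ne hst with hlt | hgt
      · exact Or.inr (Or.inl (edge_eq_minus_of_lt hp₀ hd hdne hP ht₀TT hs hlt hvE))
      · exact Or.inl (edge_eq_plus_of_gt hP hp₀ hd hdne ht₀TT hs hgt hvE)
    · by_cases hPM : P = M₀
      · subst hPM
        have hxP : x ∈ P := (mem_iff_lf (A.isLine P hP)).2 hxB.1
        rcases ep_surj hP hv0 he0 hene hxP with ⟨s, rfl⟩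
        have hs : s ∉ TT A P v e := notMem_TT_of_EBase hP hv0 he0 hene hxB
        have hs0 : s ≠ 0 := fun h => hs (h ▸ h0TT)
        have hvE' : ep v e 0 ∈ EdgeW A P (ep v e s) := by rwa [ep_zero]
        rcases lt_or_gt_of_ne hs0 with hlt | hgt
        · refine Or.inr (Or.inr (Or.inr ?_))
          have := edge_eq_minus_of_lt hv0 he0 hene hP h0TT hs hlt hvE'
          rw [neg_zero] at this
          exact this
        · exact Or.inr (Or.inr (Or.inl (edge_eq_plus_of_gt hP hv0 he0 hene h0TT hs hgt hvE')))
      · exfalso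
        refine A.no_three L hL M₀ hM₀ P hP (Ne.symm hM₀L) (fun h => hPM h.symm)
          (fun h => hPL h.symm) ⟨v, ?_, hvM₀, hvP⟩
        exact ep_mem_L hL hp₀ hd t₀
  · intro hcase
    rcases hcase with rfl | rfl | rfl | rfl
    · exact ⟨isEdge_edgePlus hL hp₀ hd hdne t₀, vertex_mem_edgePlus hL hp₀ hd hdne ht₀TT⟩
    · exact ⟨isEdge_edgePlus hL hp₀ (by rw [dlf_neg, hd, neg_zero]) (neg_ne_zero.2 hdne) _,
        vertex_mem_edgeMinus hL hp₀ hd hdne ht₀TT⟩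
    · refine ⟨isEdge_edgePlus hM₀ hv0 he0 hene _, ?_⟩
      have := vertex_mem_edgePlus hM₀ hv0 he0 hene h0TT
      rwa [ep_zero] at this
    · refine ⟨isEdge_edgePlus hM₀ hv0 he0' hene' _, ?_⟩
      have := vertex_mem_edgePlus hM₀ hv0 he0' hene' h0TT'
      rwa [ep_zero] at this

end Vertex
section Config

open SimpleLineArrangement

variable {n : ℕ} {A : SimpleLineArrangement n} {L : Set Pt2} {p₀ d : Pt2}

lemma sidePlus_iff {t₀ : ℝ} :
    ((TT A L p₀ d).filter (fun t => t₀ < t)).Nonempty ↔ ∃ t ∈ TT A L p₀ d, t₀ < t := by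
  classical
  simp [Finset.filter_nonempty_iff]

lemma sideMinus_iff {t₀ : ℝ} :
    ((TT A L p₀ (-d)).filter (fun t => -t₀ < t)).Nonempty ↔ ∃ t ∈ TT A L p₀ d, t < t₀ := by
  classical
  simp only [Finset.filter_nonempty_iff]
  constructor
  · rintro ⟨t, ht, hgt⟩
    exact ⟨-t, mem_TT_neg.1 ht, by linarith⟩
  · rintro ⟨t, ht, hlt⟩
    exact ⟨-t, mem_TT_neg.2 (by rwa [neg_neg]), by linarith⟩

section withHyp

variable (hL : L ∈ A.lines) (hp₀ : lf L p₀ = 0) (hd : dlf L d = 0) (hdne : d ≠ 0)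

include hL hp₀ hd hdne in
lemma edgePlus_ne_cross {M₀ : Set Pt2} (hM₀ : M₀ ∈ A.lines) (hM₀L : M₀ ≠ L) (t₀ : ℝ)
    (q ee : Pt2) (s₀ : ℝ) : EdgePlus A L p₀ d t₀ ≠ EdgePlus A M₀ q ee s₀ := by
  apply edge_ne_of_notMem (self_mem_edgeW A (lf_L_ep hp₀ hd (nextP A L p₀ d t₀)))
  intro hmem
  have hsub : EdgePlus A M₀ q ee s₀ ⊆ M₀ := edgeW_subset_line A hM₀ _
  exact lf_ne_of_notMem_TT hL hp₀ hd hdne (nextP_notMem _) hM₀ hM₀L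
    ((mem_iff_lf (A.isLine M₀ hM₀)).1 (hsub hmem))

variable {M₀ : Set Pt2} (hM₀ : M₀ ∈ A.lines) (hM₀L : M₀ ≠ L)
variable {e : Pt2} (he0 : dlf M₀ e = 0) (hene : e ≠ 0) {t₀ : ℝ} (ht₀ : t₀ = tv M₀ p₀ d)

include hL hp₀ hd hdne hM₀ hM₀L he0 hene ht₀ in
lemma cfgA
    (hLp : ((TT A L p₀ d).filter (fun t => t₀ < t)).Nonempty)
    (hLm : ¬ ((TT A L p₀ (-d)).filter (fun t => -t₀ < t)).Nonempty)
    (hMp : ((TT A M₀ (ep p₀ d t₀) e).filter (fun t => (0:ℝ) < t)).Nonempty)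
    (hMm : ¬ ((TT A M₀ (ep p₀ d t₀) (-e)).filter (fun t => (0:ℝ) < t)).Nonempty) :
    A.bdeg (ep p₀ d t₀) = 2 ∧
      ¬ (∃! E : Set Pt2, A.IsEdge E ∧ ¬ Bornology.IsBounded E ∧ ep p₀ d t₀ ∈ E) := by
  have hcls := edges_at hL hp₀ hd hdne hM₀ hM₀L he0 hene ht₀
  set v := ep p₀ d t₀ with hv
  have ht₀TT : t₀ ∈ TT A L p₀ d := ht₀ ▸ tv_mem_TT hM₀ hM₀L
  have hvM₀ : v ∈ M₀ := by
    rw [hv, ht₀]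
    exact (ep_tv_mem hL hp₀ hd hdne hM₀ hM₀L).2
  have hv0 : lf M₀ v = 0 := (mem_iff_lf (A.isLine M₀ hM₀)).1 hvM₀
  have he0' : dlf M₀ (-e) = 0 := by rw [dlf_neg, he0, neg_zero]
  have hene' : (-e : Pt2) ≠ 0 := neg_ne_zero.2 hene
  have hd' : dlf L (-d) = 0 := by rw [dlf_neg, hd, neg_zero]
  have hdne' : (-d : Pt2) ≠ 0 := neg_ne_zero.2 hdne
  have hLM₀ : L ≠ M₀ := Ne.symm hM₀L
  have h0tv : (0:ℝ) = tv L v e := (tv_eq_zero (lf_L_ep hp₀ hd t₀)).symm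
  have h0tv' : (0:ℝ) = tv L v (-e) := (tv_eq_zero (lf_L_ep hp₀ hd t₀)).symm
  have h0TT : (0:ℝ) ∈ TT A M₀ v e := h0tv ▸ tv_mem_TT hL hLM₀
  set E1 := EdgePlus A L p₀ d t₀ with hE1
  set E2 := EdgePlus A L p₀ (-d) (-t₀) with hE2
  set E3 := EdgePlus A M₀ v e 0 with hE3
  set E4 := EdgePlus A M₀ v (-e) 0 with hE4
  have hb1 : Bornology.IsBounded E1 := edgePlus_bounded hL hp₀ hd hdne hLp ht₀TT
  have hb3 : Bornology.IsBounded E3 := edgePlus_bounded hM₀ hv0 he0 hene hMp h0TT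
  have hu2 : ¬ Bornology.IsBounded E2 := edgePlus_unbounded hL hp₀ hd' hdne' hLm
  have hu4 : ¬ Bornology.IsBounded E4 := edgePlus_unbounded hM₀ hv0 he0' hene' hMm
  have hm1 : v ∈ E1 := vertex_mem_edgePlus hL hp₀ hd hdne ht₀TT
  have hm2 : v ∈ E2 := vertex_mem_edgeMinus hL hp₀ hd hdne ht₀TT
  have hm3 : v ∈ E3 := by
    have := vertex_mem_edgePlus hM₀ hv0 he0 hene h0TT
    rwa [ep_zero] at this
  have hm4 : v ∈ E4 := by
    have h0TT' : (0:ℝ) ∈ TT A M₀ v (-e) := h0tv' ▸ tv_mem_TT hL hLM₀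
    have := vertex_mem_edgePlus hM₀ hv0 he0' hene' h0TT'
    rwa [ep_zero] at this
  have hi1 : A.IsEdge E1 := isEdge_edgePlus hL hp₀ hd hdne t₀
  have hi2 : A.IsEdge E2 := isEdge_edgePlus hL hp₀ hd' hdne' _
  have hi3 : A.IsEdge E3 := isEdge_edgePlus hM₀ hv0 he0 hene _
  have hi4 : A.IsEdge E4 := isEdge_edgePlus hM₀ hv0 he0' hene' _
  constructor
  · have hbddset : {E : Set Pt2 | A.IsEdge E ∧ Bornology.IsBounded E ∧ v ∈ E} = {E1, E3} := by
      ext E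
      simp only [Set.mem_setOf_eq, Set.mem_insert_iff, Set.mem_singleton_iff]
      constructor
      · rintro ⟨h1, h2, h3⟩
        have hmem : E ∈ ({E1, E2, E3, E4} : Set (Set Pt2)) := by
          rw [← hcls]
          exact ⟨h1, h3⟩
        simp only [Set.mem_insert_iff, Set.mem_singleton_iff] at hmem
        rcases hmem with rfl | rfl | rfl | rfl
        · exact Or.inl rfl
        · exact absurd h2 hu2
        · exact Or.inr rfl
        · exact absurd h2 hu4
      · rintro (rfl | rfl)
        · exact ⟨hi1, hb1, hm1⟩
        · exact ⟨hi3, hb3, hm3⟩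
    have hne13 : E1 ≠ E3 := edgePlus_ne_cross hL hp₀ hd hdne hM₀ hM₀L t₀ v e 0
    rw [SimpleLineArrangement.bdeg, Nat.card_coe_set_eq, hbddset, Set.ncard_pair hne13]
  · rintro ⟨F, hF, hFu⟩
    have h2 : E2 = F := hFu E2 ⟨hi2, hu2, hm2⟩
    have h4 : E4 = F := hFu E4 ⟨hi4, hu4, hm4⟩
    have hne24 : E2 ≠ E4 := edgePlus_ne_cross hL hp₀ hd' hdne' hM₀ hM₀L (-t₀) v (-e) 0
    exact hne24 (h2.trans h4.symm)

include hL hp₀ hd hdne hM₀ hM₀L he0 hene ht₀ in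
lemma cfgB
    (hLp : ((TT A L p₀ d).filter (fun t => t₀ < t)).Nonempty)
    (hLm : ¬ ((TT A L p₀ (-d)).filter (fun t => -t₀ < t)).Nonempty)
    (hMp : ((TT A M₀ (ep p₀ d t₀) e).filter (fun t => (0:ℝ) < t)).Nonempty)
    (hMm : ((TT A M₀ (ep p₀ d t₀) (-e)).filter (fun t => (0:ℝ) < t)).Nonempty) :
    A.bdeg (ep p₀ d t₀) = 3 ∧
      (∃! E : Set Pt2, A.IsEdge E ∧ ¬ Bornology.IsBounded E ∧ ep p₀ d t₀ ∈ E) ∧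
      (∃ E : Set Pt2, A.IsEdge E ∧ ¬ Bornology.IsBounded E ∧ ep p₀ d t₀ ∈ E ∧ E ⊆ L) := by
  have hcls := edges_at hL hp₀ hd hdne hM₀ hM₀L he0 hene ht₀
  set v := ep p₀ d t₀ with hv
  have ht₀TT : t₀ ∈ TT A L p₀ d := ht₀ ▸ tv_mem_TT hM₀ hM₀L
  have hvM₀ : v ∈ M₀ := by
    rw [hv, ht₀]
    exact (ep_tv_mem hL hp₀ hd hdne hM₀ hM₀L).2
  have hv0 : lf M₀ v = 0 := (mem_iff_lf (A.isLine M₀ hM₀)).1 hvM₀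
  have he0' : dlf M₀ (-e) = 0 := by rw [dlf_neg, he0, neg_zero]
  have hene' : (-e : Pt2) ≠ 0 := neg_ne_zero.2 hene
  have hd' : dlf L (-d) = 0 := by rw [dlf_neg, hd, neg_zero]
  have hdne' : (-d : Pt2) ≠ 0 := neg_ne_zero.2 hdne
  have hLM₀ : L ≠ M₀ := Ne.symm hM₀L
  have h0tv : (0:ℝ) = tv L v e := (tv_eq_zero (lf_L_ep hp₀ hd t₀)).symm
  have h0tv' : (0:ℝ) = tv L v (-e) := (tv_eq_zero (lf_L_ep hp₀ hd t₀)).symm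
  have h0TT : (0:ℝ) ∈ TT A M₀ v e := h0tv ▸ tv_mem_TT hL hLM₀
  have h0TT' : (0:ℝ) ∈ TT A M₀ v (-e) := h0tv' ▸ tv_mem_TT hL hLM₀
  set E1 := EdgePlus A L p₀ d t₀ with hE1
  set E2 := EdgePlus A L p₀ (-d) (-t₀) with hE2
  set E3 := EdgePlus A M₀ v e 0 with hE3
  set E4 := EdgePlus A M₀ v (-e) 0 with hE4
  have hb1 : Bornology.IsBounded E1 := edgePlus_bounded hL hp₀ hd hdne hLp ht₀TT
  have hb3 : Bornology.IsBounded E3 := edgePlus_bounded hM₀ hv0 he0 hene hMp h0TT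
  have hb4 : Bornology.IsBounded E4 := edgePlus_bounded hM₀ hv0 he0' hene' hMm h0TT'
  have hu2 : ¬ Bornology.IsBounded E2 := edgePlus_unbounded hL hp₀ hd' hdne' hLm
  have hm1 : v ∈ E1 := vertex_mem_edgePlus hL hp₀ hd hdne ht₀TT
  have hm2 : v ∈ E2 := vertex_mem_edgeMinus hL hp₀ hd hdne ht₀TT
  have hm3 : v ∈ E3 := by
    have := vertex_mem_edgePlus hM₀ hv0 he0 hene h0TT
    rwa [ep_zero] at this
  have hm4 : v ∈ E4 := by
    have := vertex_mem_edgePlus hM₀ hv0 he0' hene' h0TT'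
    rwa [ep_zero] at this
  have hi1 : A.IsEdge E1 := isEdge_edgePlus hL hp₀ hd hdne t₀
  have hi2 : A.IsEdge E2 := isEdge_edgePlus hL hp₀ hd' hdne' _
  have hi3 : A.IsEdge E3 := isEdge_edgePlus hM₀ hv0 he0 hene _
  have hi4 : A.IsEdge E4 := isEdge_edgePlus hM₀ hv0 he0' hene' _
  have hne13 : E1 ≠ E3 := edgePlus_ne_cross hL hp₀ hd hdne hM₀ hM₀L t₀ v e 0
  have hne14 : E1 ≠ E4 := edgePlus_ne_cross hL hp₀ hd hdne hM₀ hM₀L t₀ v (-e) 0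
  have hne34 : E3 ≠ E4 := by
    have := edgePlus_ne_minus hM₀ hv0 he0 hene hL hLM₀ h0tv
    rwa [neg_zero] at this
  refine ⟨?_, ?_, ⟨E2, hi2, hu2, hm2, edgeW_subset_line A hL _⟩⟩
  · have hbddset : {E : Set Pt2 | A.IsEdge E ∧ Bornology.IsBounded E ∧ v ∈ E}
        = {E1, E3, E4} := by
      ext E
      simp only [Set.mem_setOf_eq, Set.mem_insert_iff, Set.mem_singleton_iff]
      constructor
      · rintro ⟨h1, h2, h3⟩
        have hmem : E ∈ ({E1, E2, E3, E4} : Set (Set Pt2)) := by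
          rw [← hcls]
          exact ⟨h1, h3⟩
        simp only [Set.mem_insert_iff, Set.mem_singleton_iff] at hmem
        rcases hmem with rfl | rfl | rfl | rfl
        · exact Or.inl rfl
        · exact absurd h2 hu2
        · exact Or.inr (Or.inl rfl)
        · exact Or.inr (Or.inr rfl)
      · rintro (rfl | rfl | rfl)
        · exact ⟨hi1, hb1, hm1⟩
        · exact ⟨hi3, hb3, hm3⟩
        · exact ⟨hi4, hb4, hm4⟩
    rw [SimpleLineArrangement.bdeg, Nat.card_coe_set_eq, hbddset]
    rw [Set.ncard_insert_of_notMem (by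
        simp only [Set.mem_insert_iff, Set.mem_singleton_iff]
        rintro (h | h)
        · exact hne13 h
        · exact hne14 h) (Set.toFinite _), Set.ncard_pair hne34]
  · refine ⟨E2, ⟨hi2, hu2, hm2⟩, ?_⟩
    rintro F ⟨h1, h2, h3⟩
    have hmem : F ∈ ({E1, E2, E3, E4} : Set (Set Pt2)) := by
      rw [← hcls]
      exact ⟨h1, h3⟩
    simp only [Set.mem_insert_iff, Set.mem_singleton_iff] at hmem
    rcases hmem with rfl | rfl | rfl | rfl
    · exact absurd hb1 h2
    · rfl
    · exact absurd hb3 h2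
    · exact absurd hb4 h2

include hL hp₀ hd hdne hM₀ hM₀L he0 hene ht₀ in
lemma cfgC
    (hLp : ((TT A L p₀ d).filter (fun t => t₀ < t)).Nonempty)
    (hLm : ((TT A L p₀ (-d)).filter (fun t => -t₀ < t)).Nonempty)
    (hMp : ((TT A M₀ (ep p₀ d t₀) e).filter (fun t => (0:ℝ) < t)).Nonempty)
    (hMm : ((TT A M₀ (ep p₀ d t₀) (-e)).filter (fun t => (0:ℝ) < t)).Nonempty) :
    ¬ (∃ E : Set Pt2, A.IsEdge E ∧ ¬ Bornology.IsBounded E ∧ ep p₀ d t₀ ∈ E) := by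
  have hcls := edges_at hL hp₀ hd hdne hM₀ hM₀L he0 hene ht₀
  set v := ep p₀ d t₀ with hv
  have ht₀TT : t₀ ∈ TT A L p₀ d := ht₀ ▸ tv_mem_TT hM₀ hM₀L
  have hvM₀ : v ∈ M₀ := by
    rw [hv, ht₀]
    exact (ep_tv_mem hL hp₀ hd hdne hM₀ hM₀L).2
  have hv0 : lf M₀ v = 0 := (mem_iff_lf (A.isLine M₀ hM₀)).1 hvM₀
  have he0' : dlf M₀ (-e) = 0 := by rw [dlf_neg, he0, neg_zero]
  have hene' : (-e : Pt2) ≠ 0 := neg_ne_zero.2 hene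
  have hd' : dlf L (-d) = 0 := by rw [dlf_neg, hd, neg_zero]
  have hdne' : (-d : Pt2) ≠ 0 := neg_ne_zero.2 hdne
  have hLM₀ : L ≠ M₀ := Ne.symm hM₀L
  have h0tv : (0:ℝ) = tv L v e := (tv_eq_zero (lf_L_ep hp₀ hd t₀)).symm
  have h0tv' : (0:ℝ) = tv L v (-e) := (tv_eq_zero (lf_L_ep hp₀ hd t₀)).symm
  have h0TT : (0:ℝ) ∈ TT A M₀ v e := h0tv ▸ tv_mem_TT hL hLM₀
  have h0TT' : (0:ℝ) ∈ TT A M₀ v (-e) := h0tv' ▸ tv_mem_TT hL hLM₀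
  have hmTTm : -t₀ ∈ TT A L p₀ (-d) := mem_TT_neg.2 (by rwa [neg_neg])
  rintro ⟨E, h1, h2, h3⟩
  have hmem : E ∈ ({EdgePlus A L p₀ d t₀, EdgePlus A L p₀ (-d) (-t₀),
      EdgePlus A M₀ v e 0, EdgePlus A M₀ v (-e) 0} : Set (Set Pt2)) := by
    rw [← hcls]
    exact ⟨h1, h3⟩
  simp only [Set.mem_insert_iff, Set.mem_singleton_iff] at hmem
  rcases hmem with rfl | rfl | rfl | rfl
  · exact h2 (edgePlus_bounded hL hp₀ hd hdne hLp ht₀TT)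
  · exact h2 (edgePlus_bounded hL hp₀ hd' hdne' hLm hmTTm)
  · exact h2 (edgePlus_bounded hM₀ hv0 he0 hene hMp h0TT)
  · exact h2 (edgePlus_bounded hM₀ hv0 he0' hene' hMm h0TT')

end withHyp

end Config
section Cells

open SimpleLineArrangement

variable {n : ℕ} {A : SimpleLineArrangement n} {L : Set Pt2}

lemma pos_of_nonneg_ne {a b : ℝ} (h : 0 ≤ a * b) (ha : a ≠ 0) (hb : b ≠ 0) : 0 < a * b :=
  lt_of_le_of_ne h (Ne.symm (mul_ne_zero ha hb))

/-- Perturb an edge base point off its line, with prescribed sign `ς` on `L`. -/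
lemma perturb (hL : L ∈ A.lines) {x : Pt2} (hx : EBase A L x) (ς : ℝ) (hς : ς ≠ 0) :
    ∃ z : Pt2, CBase A z ∧ (∀ M ∈ A.lines, M ≠ L → 0 < lf M z * lf M x) ∧ 0 < lf L z * ς := by
  classical
  set S : Set Pt2 := ⋂ M ∈ A.lines.erase L, {z : Pt2 | 0 < lf M x * lf M z} with hS
  have hSopen : IsOpen S := by
    refine isOpen_biInter_finset fun M _ => ?_
    have : {z : Pt2 | 0 < lf M x * lf M z} = (fun z => lf M x * lf M z) ⁻¹' Set.Ioi 0 := rfl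
    rw [this]
    exact (continuous_const.mul (continuous_lf M)).isOpen_preimage _ isOpen_Ioi
  have hxS : x ∈ S := by
    refine Set.mem_iInter₂.2 fun M hM => ?_
    rw [Finset.mem_erase] at hM
    exact mul_self_pos.2 (hx.2 M hM.2 hM.1)
  rcases Metric.isOpen_iff.1 hSopen x hxS with ⟨ε, hε, hball⟩
  set a := (co L).1
  set b := (co L).2.1
  set nL : Pt2 := ![a, b] with hnL
  have hab : ¬(a = 0 ∧ b = 0) := co_ne (A.isLine L hL)
  have hq : 0 < a ^ 2 + b ^ 2 := quad_pos hab
  have hdlf : dlf L nL = a ^ 2 + b ^ 2 := by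
    simp only [dlf, hnL]
    norm_num
    ring
  set δ := ς * (ε / ((|ς| + 1) * (‖nL‖ + 1))) with hδ
  have hcpos : 0 < ε / ((|ς| + 1) * (‖nL‖ + 1)) := by positivity
  have hδne : δ ≠ 0 := mul_ne_zero hς (ne_of_gt hcpos)
  set z := x + δ • nL with hz
  have hznorm : ‖z - x‖ < ε := by
    have h1 : z - x = δ • nL := by rw [hz]; abel
    rw [h1, norm_smul, Real.norm_eq_abs]
    have h2 : |δ| = |ς| * (ε / ((|ς| + 1) * (‖nL‖ + 1))) := by
      rw [hδ, abs_mul, abs_of_pos hcpos]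
    rw [h2]
    have h3 : 0 ≤ ‖nL‖ := norm_nonneg _
    have h4 : 0 ≤ |ς| := abs_nonneg _
    have hD : (0:ℝ) < (|ς| + 1) * (‖nL‖ + 1) := by positivity
    have hcD : ε / ((|ς| + 1) * (‖nL‖ + 1)) * ((|ς| + 1) * (‖nL‖ + 1)) = ε :=
      div_mul_cancel₀ _ (ne_of_gt hD)
    nlinarith [hcpos, mul_nonneg (mul_nonneg h4 hcpos.le) h3]
  have hzS : z ∈ S := hball (by simpa [Metric.mem_ball, dist_eq_norm] using hznorm)
  have hzL : lf L z = δ * (a ^ 2 + b ^ 2) := by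
    rw [hz, lf_add_smul, hdlf, hx.1]
    ring
  have hsides : ∀ M ∈ A.lines, M ≠ L → 0 < lf M z * lf M x := by
    intro M hM hML
    have h := Set.mem_iInter₂.1 hzS M (Finset.mem_erase.2 ⟨hML, hM⟩)
    rw [Set.mem_setOf_eq] at h
    linarith [mul_comm (lf M x) (lf M z) ▸ h]
  refine ⟨z, ?_, hsides, ?_⟩
  · intro M hM
    by_cases hML : M = L
    · subst hML
      rw [hzL]
      exact mul_ne_zero hδne (ne_of_gt hq)
    · intro h0
      have := hsides M hM hML
      rw [h0, zero_mul] at this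
      exact lt_irrefl _ this
  · have heq : lf L z * ς = ς ^ 2 * (ε / ((|ς| + 1) * (‖nL‖ + 1))) * (a ^ 2 + b ^ 2) := by
      rw [hzL, hδ]; ring
    rw [heq]
    positivity

lemma edgeW_subset_cellW {x z : Pt2}
    (h : ∀ M ∈ A.lines, M ≠ L → 0 < lf M z * lf M x) : EdgeW A L x ⊆ CellW A z := by
  intro y hy P hP
  by_cases hPL : P = L
  · subst hPL
    rw [hy.1, mul_zero]
  · exact (sign_transfer (h P hP hPL)).2 (hy.2 P hP hPL)

lemma cell_signs_of_superset (hL : L ∈ A.lines) {x z : Pt2} (hx : EBase A L x)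
    (hz : CBase A z) (hsub : EdgeW A L x ⊆ CellW A z) :
    ∀ M ∈ A.lines, M ≠ L → 0 < lf M z * lf M x := by
  intro M hM hML
  have hxC : x ∈ CellW A z := hsub (self_mem_edgeW A hx.1)
  exact pos_of_nonneg_ne (hxC M hM) (hz M hM) (hx.2 M hM hML)

/-- Criterion for an external edge: its two adjacent cells, exactly one bounded. -/
lemma isExternalEdge_of (hL : L ∈ A.lines) {x : Pt2} (hx : EBase A L x)
    (hbE : Bornology.IsBounded (EdgeW A L x)) {z1 z2 : Pt2}
    (h1 : CBase A z1) (h2 : CBase A z2)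
    (hs1 : ∀ M ∈ A.lines, M ≠ L → 0 < lf M z1 * lf M x)
    (hs2 : ∀ M ∈ A.lines, M ≠ L → 0 < lf M z2 * lf M x)
    (hopp : lf L z1 * lf L z2 < 0)
    (hb1 : Bornology.IsBounded (CellW A z1)) (hb2 : ¬ Bornology.IsBounded (CellW A z2)) :
    A.IsExternalEdge (EdgeW A L x) := by
  refine ⟨(isEdge_iff A).2 ⟨L, hL, x, hx, rfl⟩, hbE, CellW A z1,
    ⟨(isCell_iff A).2 ⟨z1, h1, rfl⟩, hb1, edgeW_subset_cellW hs1⟩, ?_⟩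
  rintro C ⟨hC, hCb, hCsub⟩
  rcases (isCell_iff A).1 hC with ⟨z', hz', rfl⟩
  have hs' : ∀ M ∈ A.lines, M ≠ L → 0 < lf M z' * lf M x :=
    cell_signs_of_superset hL hx hz' hCsub
  have hLz' : lf L z' ≠ 0 := hz' L hL
  have hLz1 : lf L z1 ≠ 0 := h1 L hL
  have hLz2 : lf L z2 ≠ 0 := h2 L hL
  rcases lt_or_ge 0 (lf L z' * lf L z1) with hsame | hdiff
  · apply cellW_eq_of_sameSide
    intro M hM
    by_cases hML : M = L
    · subst hML; exact hsame
    · exact sign_trans (hs' M hM hML) (by linarith [mul_comm (lf M z1) (lf M x) ▸ hs1 M hM hML])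
  · exfalso
    have hneg : lf L z' * lf L z1 < 0 :=
      lt_of_le_of_ne hdiff (mul_ne_zero hLz' hLz1)
    have hsame2 : 0 < lf L z' * lf L z2 := by nlinarith [mul_self_pos.2 hLz1]
    have : CellW A z' = CellW A z2 := by
      apply cellW_eq_of_sameSide
      intro M hM
      by_cases hML : M = L
      · subst hML; exact hsame2
      · exact sign_trans (hs' M hM hML) (by linarith [mul_comm (lf M z2) (lf M x) ▸ hs2 M hM hML])
    rw [this] at hCb
    exact hb2 hCb

set_option maxHeartbeats 1000000 in
/-- The triangle lemma: a sign cell at a vertex pinched by a third line is bounded. -/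
lemma cell_bounded_triangle (hL : L ∈ A.lines) {M₀ : Set Pt2} (hM₀ : M₀ ∈ A.lines)
    {v : Pt2} (hvL : lf L v = 0) (hvM : lf M₀ v = 0)
    {dL dM : Pt2} (hdL : dlf L dL = 0) (hdM : dlf M₀ dM = 0)
    (hM₀line : IsLine M₀)
    {z : Pt2} (hsgn : ∀ N ∈ A.lines, N ≠ L → N ≠ M₀ → 0 < lf N z * lf N v)
    (horL : 0 < lf M₀ z * dlf M₀ dL) (horM : 0 < lf L z * dlf L dM)
    {N₀ : Set Pt2} (hN₀ : N₀ ∈ A.lines) (hN₀L : N₀ ≠ L) (hN₀M : N₀ ≠ M₀)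
    {α β : ℝ} (hα : 0 < α) (hβ : 0 < β)
    (hxN : lf N₀ (v + α • dL) = 0) (hyN : lf N₀ (v + β • dM) = 0) :
    Bornology.IsBounded (CellW A z) := by
  have hcross1 : dlf M₀ dL ≠ 0 := by
    intro h; rw [h, mul_zero] at horL; exact lt_irrefl _ horL
  have hcross2 : dlf L dM ≠ 0 := by
    intro h; rw [h, mul_zero] at horM; exact lt_irrefl _ horM
  have hdMne : ¬(dM 0 = 0 ∧ dM 1 = 0) := by
    rintro ⟨h0, h1⟩
    apply hcross2
    simp only [dlf, h0, h1]
    ring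
  have hperp : dM 0 * (co M₀).1 + dM 1 * (co M₀).2.1 = 0 := by
    have h := hdM
    simp only [dlf] at h
    linarith
  rcases perp_decomp hperp hdMne with ⟨s, hsa, hsb⟩
  set det := dL 0 * dM 1 - dL 1 * dM 0 with hdet
  have hcrossform : dlf M₀ dL = -s * det := by
    simp only [dlf]
    rw [hsa, hsb, hdet]
    ring
  have hdetne : det ≠ 0 := by
    intro h
    apply hcross1
    rw [hcrossform, h, mul_zero]
  have hdlfN_L : α * dlf N₀ dL = - lf N₀ v := by
    have := hxN
    rw [lf_add_smul] at this
    linarith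
  have hdlfN_M : β * dlf N₀ dM = - lf N₀ v := by
    have := hyN
    rw [lf_add_smul] at this
    linarith
  have hK : 0 < lf N₀ z * lf N₀ v := hsgn N₀ hN₀ hN₀L hN₀M
  rw [isBounded_iff_forall_norm_le]
  refine ⟨‖v‖ + α * ‖dL‖ + β * ‖dM‖, ?_⟩
  intro y hy
  set lam := ((y 0 - v 0) * dM 1 - (y 1 - v 1) * dM 0) / det with hlam
  set mu := (dL 0 * (y 1 - v 1) - dL 1 * (y 0 - v 0)) / det with hmu
  have hdecomp : y = v + lam • dL + mu • dM := by
    funext i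
    fin_cases i
    · show y 0 = v 0 + lam * dL 0 + mu * dM 0
      rw [hlam, hmu]
      field_simp
      ring
    · show y 1 = v 1 + lam * dL 1 + mu * dM 1
      rw [hlam, hmu]
      field_simp
      ring
  have hlf : ∀ P : Set Pt2, lf P y = lf P v + lam * dlf P dL + mu * dlf P dM := by
    intro P
    conv_lhs => rw [hdecomp]
    rw [lf_add_smul, lf_add_smul]
  have hyM : lf M₀ y = lam * dlf M₀ dL := by
    rw [hlf M₀, hvM, hdM]; ring
  have hyL : lf L y = mu * dlf L dM := by
    rw [hlf L, hvL, hdL]; ring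
  have hlam0 : 0 ≤ lam := by
    have hc := hy M₀ hM₀
    rw [hyM] at hc
    nlinarith
  have hmu0 : 0 ≤ mu := by
    have hc := hy L hL
    rw [hyL] at hc
    nlinarith
  have hyN₀ : α * β * lf N₀ y = lf N₀ v * (α * β - lam * β - mu * α) := by
    rw [hlf N₀]
    have e1 : α * β * (lam * dlf N₀ dL) = lam * β * (α * dlf N₀ dL) := by ring
    have e2 : α * β * (mu * dlf N₀ dM) = mu * α * (β * dlf N₀ dM) := by ring
    have : α * β * (lf N₀ v + lam * dlf N₀ dL + mu * dlf N₀ dM)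
        = α * β * lf N₀ v + lam * β * (α * dlf N₀ dL) + mu * α * (β * dlf N₀ dM) := by ring
    rw [this, hdlfN_L, hdlfN_M]
    ring
  have hcN := hy N₀ hN₀
  have hineq : 0 ≤ α * β - lam * β - mu * α := by
    by_contra hneg
    push_neg at hneg
    have h1 : 0 ≤ α * β * (lf N₀ z * lf N₀ y) := mul_nonneg (mul_pos hα hβ).le hcN
    have h2 : α * β * (lf N₀ z * lf N₀ y)
        = (lf N₀ z * lf N₀ v) * (α * β - lam * β - mu * α) := by
      have e : α * β * (lf N₀ z * lf N₀ y) = lf N₀ z * (α * β * lf N₀ y) := by ring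
      rw [e, hyN₀]
      ring
    have h3 : 0 < (lf N₀ z * lf N₀ v) * (-(α * β - lam * β - mu * α)) :=
      mul_pos hK (by linarith)
    nlinarith
  have hlb : lam * β ≤ α * β := by
    have := mul_nonneg hmu0 hα.le
    linarith
  have hlamle : lam ≤ α := le_of_mul_le_mul_right hlb hβ
  have hmb : mu * α ≤ β * α := by
    have := mul_nonneg hlam0 hβ.le
    linarith
  have hmule : mu ≤ β := le_of_mul_le_mul_right hmb hα
  rw [hdecomp]
  have n1 : ‖v + lam • dL + mu • dM‖ ≤ ‖v‖ + ‖lam • dL‖ + ‖mu • dM‖ := by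
    calc ‖v + lam • dL + mu • dM‖ ≤ ‖v + lam • dL‖ + ‖mu • dM‖ := norm_add_le _ _
      _ ≤ ‖v‖ + ‖lam • dL‖ + ‖mu • dM‖ := by linarith [norm_add_le v (lam • dL)]
  have n2 : ‖lam • dL‖ = lam * ‖dL‖ := by
    rw [norm_smul, Real.norm_eq_abs, abs_of_nonneg hlam0]
  have n3 : ‖mu • dM‖ = mu * ‖dM‖ := by
    rw [norm_smul, Real.norm_eq_abs, abs_of_nonneg hmu0]
  rw [n2, n3] at n1
  have n4 : lam * ‖dL‖ ≤ α * ‖dL‖ := mul_le_mul_of_nonneg_right hlamle (norm_nonneg _)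
  have n5 : mu * ‖dM‖ ≤ β * ‖dM‖ := mul_le_mul_of_nonneg_right hmule (norm_nonneg _)
  linarith

end Cells
section Workhorse

open SimpleLineArrangement

variable {n : ℕ} {A : SimpleLineArrangement n} {L : Set Pt2} {p₀ d : Pt2}

lemma ep_add_smul (p₀ d : Pt2) (t s : ℝ) : ep p₀ d t + s • d = ep p₀ d (t + s) := by
  funext i
  simp only [ep, Pi.add_apply, Pi.smul_apply, smul_eq_mul]
  ring

section withHyp

variable (hL : L ∈ A.lines) (hp₀ : lf L p₀ = 0) (hd : dlf L d = 0) (hdne : d ≠ 0)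

include hL hp₀ hd hdne in
lemma pos_prod_param {N : Set Pt2} (hN : N ∈ A.lines) (hNL : N ≠ L) {s u : ℝ}
    (h : 0 < (s - tv N p₀ d) * (u - tv N p₀ d)) :
    0 < lf N (ep p₀ d s) * lf N (ep p₀ d u) := by
  rw [lf_ep_tv hL hp₀ hd hdne hN hNL, lf_ep_tv hL hp₀ hd hdne hN hNL]
  have hsl := slope_ne hL hp₀ hd hdne hN hNL
  have hsq : 0 < dlf N d * dlf N d := mul_self_pos.2 hsl
  nlinarith

include hL hp₀ hd hdne in
lemma sign_nextP_vertex (t₀ : ℝ) {N : Set Pt2} (hN : N ∈ A.lines) (hNL : N ≠ L)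
    (hNt : tv N p₀ d ≠ t₀) :
    0 < lf N (ep p₀ d (nextP A L p₀ d t₀)) * lf N (ep p₀ d t₀) := by
  apply pos_prod_param hL hp₀ hd hdne hN hNL
  have hgt := nextP_gt (A := A) (L := L) (p₀ := p₀) (d := d) t₀
  rcases nextP_sep (t₀ := t₀) (tv_mem_TT hN hNL) with hle | hlt
  · have h1 : tv N p₀ d < t₀ := lt_of_le_of_ne hle hNt
    have h2 : 0 < nextP A L p₀ d t₀ - tv N p₀ d := by linarith
    have h3 : 0 < t₀ - tv N p₀ d := by linarith
    positivity
  · have h2 : nextP A L p₀ d t₀ - tv N p₀ d < 0 := by linarith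
    have h3 : t₀ - tv N p₀ d < 0 := by linarith
    nlinarith

include hL hp₀ hd hdne in
lemma lf_crossing {N : Set Pt2} (hN : N ∈ A.lines) (hNL : N ≠ L) (t₀ : ℝ) :
    lf N (ep p₀ d t₀ + (tv N p₀ d - t₀) • d) = 0 := by
  rw [ep_add_smul]
  have he : t₀ + (tv N p₀ d - t₀) = tv N p₀ d := by ring
  rw [he]
  exact (mem_iff_lf (A.isLine N hN)).1 (ep_tv_mem hL hp₀ hd hdne hN hNL).2

include hL hp₀ hd hdne in
lemma edgeW_eq_of_param_sameSide {s s' : ℝ}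
    (h : ∀ M ∈ A.lines, M ≠ L → 0 < (s - tv M p₀ d) * (s' - tv M p₀ d)) :
    EdgeW A L (ep p₀ d s) = EdgeW A L (ep p₀ d s') := by
  apply edgeW_eq_of_sameSide
  intro M hM hML
  exact pos_prod_param hL hp₀ hd hdne hM hML (h M hM hML)

include hL hp₀ hd hdne in
lemma edge_above_external {M₀ : Set Pt2} (hM₀ : M₀ ∈ A.lines) (hM₀L : M₀ ≠ L) {t₀ : ℝ}
    (ht₀ : t₀ = tv M₀ p₀ d)
    (hup : ∃ t ∈ TT A L p₀ d, t₀ < t)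
    {e : Pt2} (he0 : dlf M₀ e = 0) (hene : e ≠ 0)
    (hMall : ∀ t ∈ TT A M₀ (ep p₀ d t₀) e, 0 ≤ t) :
    A.IsExternalEdge (EdgePlus A L p₀ d t₀) := by
  set v := ep p₀ d t₀ with hv
  have ht₀TT : t₀ ∈ TT A L p₀ d := ht₀ ▸ tv_mem_TT hM₀ hM₀L
  have hvM₀ : v ∈ M₀ := by
    rw [hv, ht₀]
    exact (ep_tv_mem hL hp₀ hd hdne hM₀ hM₀L).2
  have hv0 : lf M₀ v = 0 := (mem_iff_lf (A.isLine M₀ hM₀)).1 hvM₀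
  have hvL0 : lf L v = 0 := lf_L_ep hp₀ hd t₀
  have hLM₀ : L ≠ M₀ := Ne.symm hM₀L
  have he0' : dlf M₀ (-e) = 0 := by rw [dlf_neg, he0, neg_zero]
  have hene' : (-e : Pt2) ≠ 0 := neg_ne_zero.2 hene
  have hd' : dlf L (-d) = 0 := by rw [dlf_neg, hd, neg_zero]
  have hdne' : (-d : Pt2) ≠ 0 := neg_ne_zero.2 hdne
  -- slope of L along M₀'s direction e
  have hsLe : dlf L e ≠ 0 := slope_ne hM₀ hv0 he0 hene hL hLM₀
  -- slope of M₀ along d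
  have hsM₀d : dlf M₀ d ≠ 0 := slope_ne hL hp₀ hd hdne hM₀ hM₀L
  set x₁ := ep p₀ d (nextP A L p₀ d t₀) with hx₁
  have hx₁B : EBase A L x₁ := ebase_of_notMem_TT hL hp₀ hd hdne (nextP_notMem t₀)
  have hgtP := nextP_gt (A := A) (L := L) (p₀ := p₀) (d := d) t₀
  -- the edge is bounded
  have hplus : ((TT A L p₀ d).filter (fun t => t₀ < t)).Nonempty := by
    rcases hup with ⟨t, ht, htgt⟩
    exact ⟨t, Finset.mem_filter.2 ⟨ht, htgt⟩⟩
  have hbE : Bornology.IsBounded (EdgePlus A L p₀ d t₀) :=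
    edgePlus_bounded hL hp₀ hd hdne hplus ht₀TT
  -- the auxiliary third line: the line of a crossing above t₀
  rcases hup with ⟨tup, htupTT, htupgt⟩
  rcases mem_TT.1 htupTT with ⟨N₀, hN₀, hN₀L, htvN₀⟩
  have hN₀M : N₀ ≠ M₀ := by
    intro h
    rw [h, ← ht₀] at htvN₀
    linarith
  have hα : 0 < tv N₀ p₀ d - t₀ := by rw [htvN₀]; linarith
  have hβ : 0 < tv N₀ v e := by
    have h1 : tv N₀ v e ∈ TT A M₀ v e := tv_mem_TT hN₀ hN₀M
    have h2 := hMall _ h1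
    have h3 : tv N₀ v e ≠ tv L v e :=
      tv_inj hM₀ hv0 he0 hene hN₀ hN₀M hL hLM₀ hN₀L
    rw [tv_eq_zero hvL0] at h3
    exact lt_of_le_of_ne h2 (Ne.symm h3)
  have hxN : lf N₀ (v + (tv N₀ p₀ d - t₀) • d) = 0 := lf_crossing hL hp₀ hd hdne hN₀ hN₀L t₀
  have hyN : lf N₀ (v + tv N₀ v e • e) = 0 := by
    have := lf_crossing hM₀ hv0 he0 hene hN₀ hN₀M 0
    rw [ep_zero, sub_zero] at this
    exact this
  -- x₁'s sign pattern relative to v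
  have hx₁v : ∀ N ∈ A.lines, N ≠ L → N ≠ M₀ → 0 < lf N x₁ * lf N v := by
    intro N hN hNL hNM
    refine sign_nextP_vertex hL hp₀ hd hdne t₀ hN hNL ?_
    intro h
    exact hNM (by
      have := tv_inj hL hp₀ hd hdne hN hNL hM₀ hM₀L
      by_contra hne
      exact this hne (by rw [h, ht₀]))
  have hx₁M₀ : 0 < lf M₀ x₁ * dlf M₀ d := by
    rw [hx₁, lf_ep_tv hL hp₀ hd hdne hM₀ hM₀L, ← ht₀]
    have hsq : 0 < dlf M₀ d * dlf M₀ d := mul_self_pos.2 hsM₀d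
    nlinarith
  -- bounded adjacent cell
  rcases perturb hL hx₁B (dlf L e) hsLe with ⟨zb, hzbC, hzbS, hzbL⟩
  have hzb_bounded : Bornology.IsBounded (CellW A zb) := by
    refine cell_bounded_triangle hL hM₀ hvL0 hv0 hd he0 (A.isLine M₀ hM₀)
      (fun N hN hNL hNM => sign_trans (hzbS N hN hNL) (hx₁v N hN hNL hNM))
      (sign_trans (hzbS M₀ hM₀ hM₀L) hx₁M₀) hzbL hN₀ hN₀L hN₀M hα hβ hxN hyN
  -- unbounded adjacent cell
  rcases perturb hL hx₁B (-(dlf L e)) (neg_ne_zero.2 hsLe) with ⟨zu, hzuC, hzuS, hzuL⟩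
  set sr := nextP A M₀ v (-e) 0 with hsr
  set xr := ep v (-e) sr with hxr
  have hsrpos : 0 < sr := by
    have := nextP_gt (A := A) (L := M₀) (p₀ := v) (d := -e) 0
    linarith
  have hMme : ¬ ((TT A M₀ v (-e)).filter (fun t => (0:ℝ) < t)).Nonempty := by
    rintro ⟨t, ht⟩
    rw [Finset.mem_filter] at ht
    have h1 : -t ∈ TT A M₀ v e := mem_TT_neg.1 ht.1
    have h2 := hMall _ h1
    linarith [ht.2]
  have hray : ∀ u : ℝ, (0:ℝ) ≤ u → ep v (-e) u ∈ EdgePlus A M₀ v (-e) 0 :=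
    edgePlus_ray hM₀ hv0 he0' hene' hMme
  have hsub : EdgePlus A M₀ v (-e) 0 ⊆ CellW A zu := by
    apply edgeW_subset_cellW
    intro P hP hPM₀
    by_cases hPL : P = L
    · subst hPL
      have hxrL : lf P xr = dlf P (-e) * sr := by
        rw [hxr, lf_ep_tv hM₀ hv0 he0' hene' hP hPM₀, tv_eq_zero hvL0]
        ring
      rw [hxrL, dlf_neg]
      nlinarith
    · have c1 : 0 < lf P zu * lf P x₁ := hzuS P hP hPL
      have c2 : 0 < lf P x₁ * lf P v := hx₁v P hP hPL hPM₀
      have c3 : 0 < lf P xr * lf P v := by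
        have := sign_nextP_vertex hM₀ hv0 he0' hene' 0 hP hPM₀ (by
          rw [tv_neg]
          intro h
          have h2 : tv P v e = 0 := by linarith
          have h3 : tv P v e ≠ tv L v e :=
            tv_inj hM₀ hv0 he0 hene hP hPM₀ hL hLM₀ hPL
          rw [tv_eq_zero hvL0] at h3
          exact h3 h2)
        rw [ep_zero] at this
        exact this
      exact sign_trans (sign_trans c1 c2) (by linarith [mul_comm (lf P xr) (lf P v)])
  have hzu_unbounded : ¬ Bornology.IsBounded (CellW A zu) :=
    unbounded_of_ray hene' (fun u hu => hsub (hray u hu))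
  have hopp : lf L zb * lf L zu < 0 := by
    nlinarith [mul_pos hzbL hzuL, mul_self_nonneg (dlf L e)]
  exact isExternalEdge_of hL hx₁B hbE hzbC hzuC hzbS hzuS hopp hzb_bounded hzu_unbounded

end withHyp

end Workhorse
section WorkhorseB

open SimpleLineArrangement

variable {n : ℕ} {A : SimpleLineArrangement n} {L : Set Pt2} {p₀ d : Pt2}
variable (hL : L ∈ A.lines) (hp₀ : lf L p₀ = 0) (hd : dlf L d = 0) (hdne : d ≠ 0)

include hL hp₀ hd hdne in
lemma endB_external {M₀ : Set Pt2} (hM₀ : M₀ ∈ A.lines) (hM₀L : M₀ ≠ L) {t₀ : ℝ}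
    (ht₀ : t₀ = tv M₀ p₀ d)
    (hbot : ∀ t ∈ TT A L p₀ d, t ≠ t₀ → t₀ < t)
    {e : Pt2} (he0 : dlf M₀ e = 0) (hene : e ≠ 0)
    (hMp : ∃ t ∈ TT A M₀ (ep p₀ d t₀) e, 0 < t)
    (hMm : ∃ t ∈ TT A M₀ (ep p₀ d t₀) e, t < 0) :
    (∃ E : Set Pt2, A.IsExternalEdge E ∧ ep p₀ d t₀ ∈ E) ∧
      ¬ A.IsExternalEdge (EdgePlus A L p₀ d t₀) := by
  set v := ep p₀ d t₀ with hv
  have ht₀TT : t₀ ∈ TT A L p₀ d := ht₀ ▸ tv_mem_TT hM₀ hM₀L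
  have hvM₀ : v ∈ M₀ := by
    rw [hv, ht₀]
    exact (ep_tv_mem hL hp₀ hd hdne hM₀ hM₀L).2
  have hv0 : lf M₀ v = 0 := (mem_iff_lf (A.isLine M₀ hM₀)).1 hvM₀
  have hvL0 : lf L v = 0 := lf_L_ep hp₀ hd t₀
  have hLM₀ : L ≠ M₀ := Ne.symm hM₀L
  have he0' : dlf M₀ (-e) = 0 := by rw [dlf_neg, he0, neg_zero]
  have hene' : (-e : Pt2) ≠ 0 := neg_ne_zero.2 hene
  have hd' : dlf L (-d) = 0 := by rw [dlf_neg, hd, neg_zero]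
  have hdne' : (-d : Pt2) ≠ 0 := neg_ne_zero.2 hdne
  have hsLe : dlf L e ≠ 0 := slope_ne hM₀ hv0 he0 hene hL hLM₀
  have hsM₀d : dlf M₀ d ≠ 0 := slope_ne hL hp₀ hd hdne hM₀ hM₀L
  have h0tv : (0:ℝ) = tv L v e := (tv_eq_zero hvL0).symm
  have h0TT : (0:ℝ) ∈ TT A M₀ v e := h0tv ▸ tv_mem_TT hL hLM₀
  rcases hMp with ⟨t₁, ht₁TT, ht₁pos⟩
  rcases mem_TT.1 ht₁TT with ⟨N₁, hN₁, hN₁M, htv1⟩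
  have hN₁L : N₁ ≠ L := by
    intro h
    rw [h, ← h0tv] at htv1
    linarith
  rcases hMm with ⟨t₂, ht₂TT, ht₂neg⟩
  rcases mem_TT.1 ht₂TT with ⟨N₂, hN₂, hN₂M, htv2⟩
  have hN₂L : N₂ ≠ L := by
    intro h
    rw [h, ← h0tv] at htv2
    linarith
  -- bottom vertex: crossings of L are above t₀
  have hβ : ∀ {N : Set Pt2}, N ∈ A.lines → N ≠ L → N ≠ M₀ → 0 < tv N p₀ d - t₀ := by
    intro N hN hNL hNM
    have h1 : tv N p₀ d ∈ TT A L p₀ d := tv_mem_TT hN hNL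
    have h2 : tv N p₀ d ≠ t₀ := by
      intro h
      exact hNM (by
        by_contra hne
        exact tv_inj hL hp₀ hd hdne hN hNL hM₀ hM₀L hne (by rw [h, ht₀]))
    linarith [hbot _ h1 h2]
  -- sign pattern: the M₀-edge base point vs v
  set s₁ := nextP A M₀ v e 0 with hs₁
  set xp := ep v e s₁ with hxp
  have hxpB : EBase A M₀ xp := ebase_of_notMem_TT hM₀ hv0 he0 hene (nextP_notMem 0)
  have hs₁pos : 0 < s₁ := by
    have := nextP_gt (A := A) (L := M₀) (p₀ := v) (d := e) 0
    linarith
  have hxpv : ∀ N ∈ A.lines, N ≠ M₀ → N ≠ L → 0 < lf N xp * lf N v := by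
    intro N hN hNM hNL
    have := sign_nextP_vertex hM₀ hv0 he0 hene 0 hN hNM (by
      intro h
      have h3 : tv N v e ≠ tv L v e := tv_inj hM₀ hv0 he0 hene hN hNM hL hLM₀ hNL
      rw [← h0tv] at h3
      exact h3 h)
    rwa [ep_zero] at this
  have hxpL : 0 < lf L xp * dlf L e := by
    rw [hxp, lf_ep_tv hM₀ hv0 he0 hene hL hLM₀, ← h0tv]
    have hsq : 0 < dlf L e * dlf L e := mul_self_pos.2 hsLe
    nlinarith
  -- sign pattern: the inner L-edge base point vs v
  set x₁ := ep p₀ d (nextP A L p₀ d t₀) with hx₁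
  have hx₁B : EBase A L x₁ := ebase_of_notMem_TT hL hp₀ hd hdne (nextP_notMem t₀)
  have hx₁v : ∀ N ∈ A.lines, N ≠ L → N ≠ M₀ → 0 < lf N x₁ * lf N v := by
    intro N hN hNL hNM
    refine sign_nextP_vertex hL hp₀ hd hdne t₀ hN hNL ?_
    intro h
    have := hβ hN hNL hNM
    linarith [h ▸ this]
  have hx₁M₀ : 0 < lf M₀ x₁ * dlf M₀ d := by
    rw [hx₁, lf_ep_tv hL hp₀ hd hdne hM₀ hM₀L, ← ht₀]
    have hsq : 0 < dlf M₀ d * dlf M₀ d := mul_self_pos.2 hsM₀d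
    have := nextP_gt (A := A) (L := L) (p₀ := p₀) (d := d) t₀
    nlinarith
  -- crossing data for N₁ and N₂
  have hxN1e : lf N₁ (v + t₁ • e) = 0 := by
    have := lf_crossing hM₀ hv0 he0 hene hN₁ hN₁M 0
    rwa [ep_zero, sub_zero, htv1] at this
  have hxN1d : lf N₁ (v + (tv N₁ p₀ d - t₀) • d) = 0 := lf_crossing hL hp₀ hd hdne hN₁ hN₁L t₀
  have hxN2e : lf N₂ (v + (- t₂) • (-e)) = 0 := by
    have := lf_crossing hM₀ hv0 he0' hene' hN₂ hN₂M 0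
    rwa [ep_zero, sub_zero, tv_neg, htv2] at this
  have hxN2d : lf N₂ (v + (tv N₂ p₀ d - t₀) • d) = 0 := lf_crossing hL hp₀ hd hdne hN₂ hN₂L t₀
  constructor
  · -- part 1 : v lies on an external edge (on M₀)
    have hMpf : ((TT A M₀ v e).filter (fun t => (0:ℝ) < t)).Nonempty :=
      ⟨t₁, Finset.mem_filter.2 ⟨ht₁TT, ht₁pos⟩⟩
    have hbE : Bornology.IsBounded (EdgePlus A M₀ v e 0) :=
      edgePlus_bounded hM₀ hv0 he0 hene hMpf h0TT
    rcases perturb hM₀ hxpB (dlf M₀ d) hsM₀d with ⟨zb, hzbC, hzbS, hzbL⟩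
    have hzb_bounded : Bornology.IsBounded (CellW A zb) := by
      refine cell_bounded_triangle hM₀ hL hv0 hvL0 he0 hd (A.isLine L hL)
        (fun N hN hNM hNL => sign_trans (hzbS N hN hNM) (hxpv N hN hNM hNL))
        (sign_trans (hzbS L hL hLM₀) hxpL) hzbL hN₁ hN₁M hN₁L (htv1 ▸ ht₁pos)
        (hβ hN₁ hN₁L hN₁M) (by rwa [htv1]) hxN1d
    rcases perturb hM₀ hxpB (-(dlf M₀ d)) (neg_ne_zero.2 hsM₀d) with ⟨zu, hzuC, hzuS, hzuL⟩
    have hLm : ¬ ((TT A L p₀ (-d)).filter (fun t => -t₀ < t)).Nonempty := by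
      rw [sideMinus_iff]
      rintro ⟨t, ht, hlt⟩
      rcases eq_or_ne t t₀ with rfl | hne
      · exact lt_irrefl _ hlt
      · linarith [hbot t ht hne]
    have hray := edgePlus_ray hL hp₀ hd' hdne' hLm
    set sout := nextP A L p₀ (-d) (-t₀) with hsout
    set xout := ep p₀ (-d) sout with hxout
    have hsoutgt : -t₀ < sout := nextP_gt (A := A) (L := L) (p₀ := p₀) (d := -d) (-t₀)
    have hsub : EdgePlus A L p₀ (-d) (-t₀) ⊆ CellW A zu := by
      apply edgeW_subset_cellW
      intro P hP hPL
      by_cases hPM : P = M₀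
      · subst hPM
        have hxoutM : lf P xout = dlf P (-d) * (sout - tv P p₀ (-d)) := by
          rw [hxout]
          exact lf_ep_tv hL hp₀ hd' hdne' hP hPL sout
        rw [hxoutM, tv_neg, ← ht₀, dlf_neg]
        nlinarith
      · have c1 : 0 < lf P zu * lf P xp := hzuS P hP hPM
        have c2 : 0 < lf P xp * lf P v := hxpv P hP hPM hPL
        have c3 : 0 < lf P xout * lf P v := by
          have := sign_nextP_vertex hL hp₀ hd' hdne' (-t₀) hP hPL (by
            rw [tv_neg]
            intro h
            have h2 : tv P p₀ d = t₀ := by linarith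
            have := hβ hP hPL hPM
            linarith [h2 ▸ this])
          have hveq : ep p₀ (-d) (-t₀) = ep p₀ d t₀ := by rw [ep_neg, neg_neg]
          rwa [hveq] at this
        exact sign_trans (sign_trans c1 c2) (by linarith [mul_comm (lf P xout) (lf P v)])
    have hzu_unbounded : ¬ Bornology.IsBounded (CellW A zu) :=
      unbounded_of_ray hdne' (fun u hu => hsub (hray u hu))
    have hopp : lf M₀ zb * lf M₀ zu < 0 := by
      nlinarith [mul_pos hzbL hzuL, mul_self_nonneg (dlf M₀ d)]
    refine ⟨EdgePlus A M₀ v e 0,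
      isExternalEdge_of hM₀ hxpB hbE hzbC hzuC hzbS hzuS hopp hzb_bounded hzu_unbounded, ?_⟩
    have := vertex_mem_edgePlus hM₀ hv0 he0 hene h0TT
    rwa [ep_zero] at this
  · -- part 2 : the inner edge of L at v is not an external edge
    intro hext
    rcases hext.2.2 with ⟨C, hC, hCu⟩
    rcases perturb hL hx₁B (dlf L e) hsLe with ⟨w1, hw1C, hw1S, hw1L⟩
    rcases perturb hL hx₁B (-(dlf L e)) (neg_ne_zero.2 hsLe) with ⟨w2, hw2C, hw2S, hw2L⟩
    have hb1 : Bornology.IsBounded (CellW A w1) := by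
      refine cell_bounded_triangle hL hM₀ hvL0 hv0 hd he0 (A.isLine M₀ hM₀)
        (fun N hN hNL hNM => sign_trans (hw1S N hN hNL) (hx₁v N hN hNL hNM))
        (sign_trans (hw1S M₀ hM₀ hM₀L) hx₁M₀) hw1L hN₁ hN₁L hN₁M
        (hβ hN₁ hN₁L hN₁M) (htv1 ▸ ht₁pos) hxN1d (by rwa [htv1])
    have hb2 : Bornology.IsBounded (CellW A w2) := by
      refine cell_bounded_triangle hL hM₀ hvL0 hv0 hd he0' (A.isLine M₀ hM₀)
        (fun N hN hNL hNM => sign_trans (hw2S N hN hNL) (hx₁v N hN hNL hNM))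
        (sign_trans (hw2S M₀ hM₀ hM₀L) hx₁M₀) (by rw [dlf_neg]; exact hw2L) hN₂ hN₂L hN₂M
        (hβ hN₂ hN₂L hN₂M) (by linarith) hxN2d hxN2e
    have e1 : CellW A w1 = C :=
      hCu _ ⟨(isCell_iff A).2 ⟨w1, hw1C, rfl⟩, hb1, edgeW_subset_cellW hw1S⟩
    have e2 : CellW A w2 = C :=
      hCu _ ⟨(isCell_iff A).2 ⟨w2, hw2C, rfl⟩, hb2, edgeW_subset_cellW hw2S⟩
    have hmem : w1 ∈ CellW A w2 := by
      rw [e2, ← e1]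
      exact self_mem_cellW A w1
    have hge := hmem L hL
    nlinarith [mul_pos hw1L hw2L, mul_self_nonneg (dlf L e)]

end WorkhorseB
section Handler

open SimpleLineArrangement

variable {n : ℕ} {A : SimpleLineArrangement n} {L : Set Pt2} {p₀ d : Pt2}
variable (hL : L ∈ A.lines) (hp₀ : lf L p₀ = 0) (hd : dlf L d = 0) (hdne : d ≠ 0)

include hL hp₀ hd hdne in
lemma end_handler (hn : 4 ≤ n) {M₀ : Set Pt2} (hM₀ : M₀ ∈ A.lines) (hM₀L : M₀ ≠ L) {t₀ : ℝ}
    (ht₀ : t₀ = tv M₀ p₀ d)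
    (hbot : ∀ t ∈ TT A L p₀ d, t ≠ t₀ → t₀ < t) :
    (A.bdeg (ep p₀ d t₀) = 2 ∧ A.IsExternalVertex (ep p₀ d t₀) ∧
      ¬ (∃! E : Set Pt2, A.IsEdge E ∧ ¬ Bornology.IsBounded E ∧ ep p₀ d t₀ ∈ E) ∧
      A.IsExternalEdge (EdgePlus A L p₀ d t₀)) ∨
    (A.bdeg (ep p₀ d t₀) = 3 ∧ A.IsExternalVertex (ep p₀ d t₀) ∧
      (∃! E : Set Pt2, A.IsEdge E ∧ ¬ Bornology.IsBounded E ∧ ep p₀ d t₀ ∈ E) ∧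
      (∃ E : Set Pt2, A.IsEdge E ∧ ¬ Bornology.IsBounded E ∧ ep p₀ d t₀ ∈ E ∧ E ⊆ L) ∧
      ¬ A.IsExternalEdge (EdgePlus A L p₀ d t₀)) := by
  classical
  set v := ep p₀ d t₀ with hv
  have ht₀TT : t₀ ∈ TT A L p₀ d := ht₀ ▸ tv_mem_TT hM₀ hM₀L
  have hvM₀ : v ∈ M₀ := by
    rw [hv, ht₀]
    exact (ep_tv_mem hL hp₀ hd hdne hM₀ hM₀L).2
  have hv0 : lf M₀ v = 0 := (mem_iff_lf (A.isLine M₀ hM₀)).1 hvM₀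
  have hvL0 : lf L v = 0 := lf_L_ep hp₀ hd t₀
  have hLM₀ : L ≠ M₀ := Ne.symm hM₀L
  set e₀ := dir M₀ with he₀def
  have he0 : dlf M₀ e₀ = 0 := dlf_dir M₀
  have hene : e₀ ≠ 0 := dir_ne (A.isLine M₀ hM₀)
  have he0' : dlf M₀ (-e₀) = 0 := by rw [dlf_neg, he0, neg_zero]
  have hene' : (-e₀ : Pt2) ≠ 0 := neg_ne_zero.2 hene
  have hvert : A.IsVertex v := ⟨L, hL, M₀, hM₀, hLM₀, ep_mem_L hL hp₀ hd t₀, hvM₀⟩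
  have hcard : 1 < (TT A L p₀ d).card := by
    rw [TT_card hL hp₀ hd hdne]
    omega
  obtain ⟨taux, htauxTT, htauxne⟩ := Finset.exists_mem_ne hcard t₀
  have hLp : ((TT A L p₀ d).filter (fun t => t₀ < t)).Nonempty :=
    ⟨taux, Finset.mem_filter.2 ⟨htauxTT, hbot _ htauxTT htauxne⟩⟩
  have hup : ∃ t ∈ TT A L p₀ d, t₀ < t := ⟨taux, htauxTT, hbot _ htauxTT htauxne⟩
  have hLm : ¬ ((TT A L p₀ (-d)).filter (fun t => -t₀ < t)).Nonempty := by
    rw [sideMinus_iff]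
    rintro ⟨t, ht, hlt⟩
    rcases eq_or_ne t t₀ with rfl | hne
    · exact lt_irrefl _ hlt
    · linarith [hbot t ht hne]
  have hvmem : v ∈ EdgePlus A L p₀ d t₀ := vertex_mem_edgePlus hL hp₀ hd hdne ht₀TT
  have hcardM : 1 < (TT A M₀ v e₀).card := by
    rw [TT_card hM₀ hv0 he0 hene]
    omega
  by_cases hpos : ∃ t ∈ TT A M₀ v e₀, 0 < t
  · by_cases hneg : ∃ t ∈ TT A M₀ v e₀, t < 0
    · -- interior on M₀ : bdeg 3
      right
      have hMpf : ((TT A M₀ v e₀).filter (fun t => (0:ℝ) < t)).Nonempty := by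
        rcases hpos with ⟨t, ht, htp⟩
        exact ⟨t, Finset.mem_filter.2 ⟨ht, htp⟩⟩
      have hMmf : ((TT A M₀ v (-e₀)).filter (fun t => (0:ℝ) < t)).Nonempty := by
        rcases hneg with ⟨t, ht, htn⟩
        exact ⟨-t, Finset.mem_filter.2 ⟨mem_TT_neg.2 (by rwa [neg_neg]), by linarith⟩⟩
      obtain ⟨hb3, hexu, hexsub⟩ :=
        cfgB hL hp₀ hd hdne hM₀ hM₀L he0 hene ht₀ hLp hLm hMpf hMmf
      obtain ⟨⟨E, hEext, hEmem⟩, hnotext⟩ :=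
        endB_external hL hp₀ hd hdne hM₀ hM₀L ht₀ hbot he0 hene hpos hneg
      exact ⟨hb3, ⟨hvert, E, hEext, hEmem⟩, hexu, hexsub, hnotext⟩
    · -- extreme on M₀, crossings on the e₀ side : bdeg 2
      left
      push_neg at hneg
      have hMall : ∀ t ∈ TT A M₀ v e₀, 0 ≤ t := hneg
      have hMpf : ((TT A M₀ v e₀).filter (fun t => (0:ℝ) < t)).Nonempty := by
        rcases hpos with ⟨t, ht, htp⟩
        exact ⟨t, Finset.mem_filter.2 ⟨ht, htp⟩⟩
      have hMmf : ¬ ((TT A M₀ v (-e₀)).filter (fun t => (0:ℝ) < t)).Nonempty := by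
        rintro ⟨t, ht⟩
        rw [Finset.mem_filter] at ht
        have h1 := hMall _ (mem_TT_neg.1 ht.1)
        linarith [ht.2]
      obtain ⟨hb2, hnotu⟩ := cfgA hL hp₀ hd hdne hM₀ hM₀L he0 hene ht₀ hLp hLm hMpf hMmf
      have hext := edge_above_external hL hp₀ hd hdne hM₀ hM₀L ht₀ hup he0 hene hMall
      exact ⟨hb2, ⟨hvert, _, hext, hvmem⟩, hnotu, hext⟩
  · -- extreme on M₀, crossings on the (-e₀) side : bdeg 2
    left
    push_neg at hpos
    have hMall' : ∀ t ∈ TT A M₀ v (-e₀), 0 ≤ t := by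
      intro t ht
      have h1 := hpos _ (mem_TT_neg.1 ht)
      linarith
    obtain ⟨taux2, htaux2, htaux2ne⟩ := Finset.exists_mem_ne hcardM 0
    have htaux2neg : taux2 < 0 := lt_of_le_of_ne (hpos _ htaux2) htaux2ne
    have hMpf' : ((TT A M₀ v (-e₀)).filter (fun t => (0:ℝ) < t)).Nonempty :=
      ⟨-taux2, Finset.mem_filter.2 ⟨mem_TT_neg.2 (by rwa [neg_neg]), by linarith⟩⟩
    have hMmf' : ¬ ((TT A M₀ v (-(-e₀))).filter (fun t => (0:ℝ) < t)).Nonempty := by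
      rintro ⟨t, ht⟩
      rw [Finset.mem_filter] at ht
      have h1 : -t ∈ TT A M₀ v (-e₀) := mem_TT_neg.1 ht.1
      have h2 : t ∈ TT A M₀ v e₀ := by
        have := mem_TT_neg.1 h1
        rwa [neg_neg] at this
      linarith [hpos _ h2, ht.2]
    obtain ⟨hb2, hnotu⟩ := cfgA hL hp₀ hd hdne hM₀ hM₀L he0' hene' ht₀ hLp hLm hMpf' hMmf'
    have hext := edge_above_external hL hp₀ hd hdne hM₀ hM₀L ht₀ hup he0' hene' hMall'
    exact ⟨hb2, ⟨hvert, _, hext, hvmem⟩, hnotu, hext⟩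

end Handler
section Walk

open SimpleLineArrangement

variable {n : ℕ} {A : SimpleLineArrangement n} {L : Set Pt2} {p₀ d : Pt2}
variable (hL : L ∈ A.lines) (hp₀ : lf L p₀ = 0) (hd : dlf L d = 0) (hdne : d ≠ 0)

include hL hp₀ hd hdne in
lemma case3_walk (hn : 4 ≤ n) {tmin tmax : ℝ}
    (hminTT : tmin ∈ TT A L p₀ d) (hmaxTT : tmax ∈ TT A L p₀ d)
    (hmaxge : ∀ t ∈ TT A L p₀ d, t ≤ tmax)
    (hlt : tmin < tmax)
    (hstart : A.IsExternalEdge (EdgePlus A L p₀ d tmin))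
    (hend : ¬ A.IsExternalEdge (EdgePlus A L p₀ (-d) (-tmax))) :
    ∃ u : Pt2, A.IsExternalVertex u ∧
      ¬ (∃ E : Set Pt2, A.IsEdge E ∧ ¬ Bornology.IsBounded E ∧ u ∈ E) ∧
      u ∈ L ∧ u ≠ ep p₀ d tmin ∧ u ≠ ep p₀ d tmax := by
  classical
  have hd' : dlf L (-d) = 0 := by rw [dlf_neg, hd, neg_zero]
  have hdne' : (-d : Pt2) ≠ 0 := neg_ne_zero.2 hdne
  set G := (TT A L p₀ d).filter
    (fun t => t < tmax ∧ A.IsExternalEdge (EdgePlus A L p₀ d t)) with hG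
  have hGne : G.Nonempty := ⟨tmin, Finset.mem_filter.2 ⟨hminTT, hlt, hstart⟩⟩
  set ts := G.max' hGne with hts
  have htsmem := Finset.mem_filter.1 (G.max'_mem hGne)
  have htsTT : ts ∈ TT A L p₀ d := htsmem.1
  have htslt : ts < tmax := htsmem.2.1
  have htsext : A.IsExternalEdge (EdgePlus A L p₀ d ts) := htsmem.2.2
  have hmaxG : ∀ t ∈ G, t ≤ ts := fun t ht => Finset.le_max' G t ht
  set F := (TT A L p₀ d).filter (fun t => ts < t) with hF
  have hFne : F.Nonempty := ⟨tmax, Finset.mem_filter.2 ⟨hmaxTT, htslt⟩⟩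
  set tnx := F.min' hFne with htnx
  have htnxmem := Finset.mem_filter.1 (F.min'_mem hFne)
  have htnxTT : tnx ∈ TT A L p₀ d := htnxmem.1
  have htsnx : ts < tnx := htnxmem.2
  have htnxmin : ∀ t ∈ TT A L p₀ d, ts < t → tnx ≤ t := fun t ht hgt =>
    F.min'_le t (Finset.mem_filter.2 ⟨ht, hgt⟩)
  set u := ep p₀ d tnx with hu
  have hgtP := nextP_gt (A := A) (L := L) (p₀ := p₀) (d := d) ts
  have humem : u ∈ EdgePlus A L p₀ d ts := by
    rw [hu, EdgePlus, mem_edgeW_param_iff hL hp₀ hd hdne (nextP_notMem ts)]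
    intro M hM hML
    rcases nextP_sep (t₀ := ts) (tv_mem_TT hM hML) with hle | hgt
    · have h1 : 0 ≤ nextP A L p₀ d ts - tv M p₀ d := by linarith
      have h2 : 0 ≤ tnx - tv M p₀ d := by linarith
      positivity
    · have h3 : tnx ≤ tv M p₀ d := htnxmin _ (tv_mem_TT hM hML) (by linarith)
      have h1 : nextP A L p₀ d ts - tv M p₀ d < 0 := by linarith
      have h2 : tnx - tv M p₀ d ≤ 0 := by linarith
      nlinarith
  have htnxmax : tnx ≠ tmax := by
    intro heq
    apply hend
    have hs2sep : ∀ t ∈ TT A L p₀ (-d), t ≤ -tmax ∨ nextP A L p₀ (-d) (-tmax) < t :=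
      fun t ht => nextP_sep ht
    have hs2gt : -tmax < nextP A L p₀ (-d) (-tmax) :=
      nextP_gt (A := A) (L := L) (p₀ := p₀) (d := -d) (-tmax)
    set s1 := nextP A L p₀ d ts with hs1
    set s2 := nextP A L p₀ (-d) (-tmax) with hs2
    have hs2ts : s2 < -ts := by
      have hmem : -ts ∈ TT A L p₀ (-d) := mem_TT_neg.2 (by rwa [neg_neg])
      rcases hs2sep _ hmem with h | h
      · linarith
      · linarith
    have hEeq : EdgePlus A L p₀ d ts = EdgePlus A L p₀ (-d) (-tmax) := by
      have hrepr : ep p₀ (-d) s2 = ep p₀ d (-s2) := ep_neg p₀ d s2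
      have : EdgePlus A L p₀ (-d) (-tmax) = EdgeW A L (ep p₀ d (-s2)) := by
        rw [EdgePlus, hrepr]
      rw [this, EdgePlus]
      apply edgeW_eq_of_param_sameSide hL hp₀ hd hdne
      intro M hM hML
      rcases nextP_sep (t₀ := ts) (tv_mem_TT hM hML) with hle | hgt
      · have h1 : 0 < s1 - tv M p₀ d := by linarith
        have h2 : 0 < -s2 - tv M p₀ d := by linarith
        positivity
      · have h3 : tnx ≤ tv M p₀ d := htnxmin _ (tv_mem_TT hM hML) (by linarith)
        have h4 : tmax ≤ tv M p₀ d := by rw [← heq]; exact h3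
        have h1 : s1 - tv M p₀ d < 0 := by linarith
        have h2 : -s2 - tv M p₀ d < 0 := by linarith
        nlinarith
    rw [← hEeq]
    exact htsext
  have htnxlt : tnx < tmax := lt_of_le_of_ne (hmaxge _ htnxTT) htnxmax
  rcases mem_TT.1 htnxTT with ⟨Mu, hMu, hMuL, htvMu⟩
  have ht₀Mu : tnx = tv Mu p₀ d := htvMu.symm
  have huL : u ∈ L := ep_mem_L hL hp₀ hd tnx
  have huMu : u ∈ Mu := by
    rw [hu, ht₀Mu]
    exact (ep_tv_mem hL hp₀ hd hdne hMu hMuL).2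
  have hu0 : lf Mu u = 0 := (mem_iff_lf (A.isLine Mu hMu)).1 huMu
  have huL0 : lf L u = 0 := lf_L_ep hp₀ hd tnx
  have hvertu : A.IsVertex u := ⟨L, hL, Mu, hMu, Ne.symm hMuL, huL, huMu⟩
  have hextu : A.IsExternalVertex u := ⟨hvertu, EdgePlus A L p₀ d ts, htsext, humem⟩
  have hup : ∃ t ∈ TT A L p₀ d, tnx < t := ⟨tmax, hmaxTT, htnxlt⟩
  set e₀ := dir Mu with he₀def
  have he0 : dlf Mu e₀ = 0 := dlf_dir Mu
  have hene : e₀ ≠ 0 := dir_ne (A.isLine Mu hMu)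
  have he0' : dlf Mu (-e₀) = 0 := by rw [dlf_neg, he0, neg_zero]
  have hene' : (-e₀ : Pt2) ≠ 0 := neg_ne_zero.2 hene
  -- u must be interior on Mu, otherwise the edge above tnx would be external,
  -- contradicting maximality of ts
  by_cases hpos : ∃ t ∈ TT A Mu u e₀, 0 < t
  · by_cases hneg : ∃ t ∈ TT A Mu u e₀, t < 0
    · -- interior on Mu : no unbounded edges at u
      have hLp : ((TT A L p₀ d).filter (fun t => tnx < t)).Nonempty :=
        ⟨tmax, Finset.mem_filter.2 ⟨hmaxTT, htnxlt⟩⟩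
      have hLm : ((TT A L p₀ (-d)).filter (fun t => -tnx < t)).Nonempty := by
        rw [sideMinus_iff]
        exact ⟨ts, htsTT, htsnx⟩
      have hMpf : ((TT A Mu u e₀).filter (fun t => (0:ℝ) < t)).Nonempty := by
        rcases hpos with ⟨t, ht, htp⟩
        exact ⟨t, Finset.mem_filter.2 ⟨ht, htp⟩⟩
      have hMmf : ((TT A Mu u (-e₀)).filter (fun t => (0:ℝ) < t)).Nonempty := by
        rcases hneg with ⟨t, ht, htn⟩
        exact ⟨-t, Finset.mem_filter.2 ⟨mem_TT_neg.2 (by rwa [neg_neg]), by linarith⟩⟩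
      have hnone := cfgC hL hp₀ hd hdne hMu hMuL he0 hene ht₀Mu hLp hLm hMpf hMmf
      refine ⟨u, hextu, hnone, huL, ?_, ?_⟩
      · intro h
        have heq : tnx = tmin := ep_injective hdne (by rw [← hu]; exact h)
        have h1 : tmin ≤ ts := hmaxG tmin (Finset.mem_filter.2 ⟨hminTT, hlt, hstart⟩)
        rw [heq] at htsnx
        linarith
      · intro h
        exact htnxmax (ep_injective hdne (by rw [← hu]; exact h))
    · -- extreme on Mu with crossings on e₀ side : contradiction
      exfalso
      push_neg at hneg
      have hext := edge_above_external hL hp₀ hd hdne hMu hMuL ht₀Mu hup he0 hene hneg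
      have : tnx ∈ G := Finset.mem_filter.2 ⟨htnxTT, htnxlt, hext⟩
      linarith [hmaxG _ this]
  · exfalso
    push_neg at hpos
    have hMall' : ∀ t ∈ TT A Mu u (-e₀), 0 ≤ t := by
      intro t ht
      have h1 := hpos _ (mem_TT_neg.1 ht)
      linarith
    have hext := edge_above_external hL hp₀ hd hdne hMu hMuL ht₀Mu hup he0' hene' hMall'
    have : tnx ∈ G := Finset.mem_filter.2 ⟨htnxTT, htnxlt, hext⟩
    linarith [hmaxG _ this]

end Walk
/-- With the weight redistribution scheme, a line of type `h₂,₂` (both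
end-vertices incident to exactly 2 bounded edges) receives total weight at
least `1`, a line of type `h₃,₃` receives weight at least `2`, and a line of
type `h₂,₃` receives weight at least `2`. -/
theorem line_weight_lower_bounds (n : ℕ) (hn : 4 ≤ n)
    (A : SimpleLineArrangement n) (V : Finset Pt2)
    (hV : ∀ v : Pt2, v ∈ V ↔ A.IsExternalVertex v)
    (w : Pt2 → Set Pt2 → ℝ)
    (hw_off : ∀ v ∈ V, ∀ L ∈ A.lines, v ∉ L → w v L = 0)
    (hw_one : ∀ v ∈ V, ∀ L ∈ A.lines, v ∈ L →
      (∃! E : Set Pt2, A.IsEdge E ∧ ¬ Bornology.IsBounded E ∧ v ∈ E) →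
      ((∃ E : Set Pt2, A.IsEdge E ∧ ¬ Bornology.IsBounded E ∧ v ∈ E ∧ E ⊆ L) →
          w v L = 1) ∧
      (¬ (∃ E : Set Pt2, A.IsEdge E ∧ ¬ Bornology.IsBounded E ∧ v ∈ E ∧ E ⊆ L) →
          w v L = 0))
    (hw_half : ∀ v ∈ V, ∀ L ∈ A.lines, v ∈ L →
      ¬ (∃! E : Set Pt2, A.IsEdge E ∧ ¬ Bornology.IsBounded E ∧ v ∈ E) →
      w v L = 1 / 2) :
    ∀ L ∈ A.lines,
      ((∀ v : Pt2, A.IsEndVertex L v → A.bdeg v = 2) → 1 ≤ ∑ v ∈ V, w v L) ∧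
      ((∀ v : Pt2, A.IsEndVertex L v → A.bdeg v = 3) → 2 ≤ ∑ v ∈ V, w v L) ∧
      ((∃ v₁ v₂ : Pt2, v₁ ≠ v₂ ∧ A.IsEndVertex L v₁ ∧ A.IsEndVertex L v₂ ∧
          A.bdeg v₁ = 2 ∧ A.bdeg v₂ = 3) → 2 ≤ ∑ v ∈ V, w v L) := by
  intro L hL
  classical
  -- parametrize L
  have hab : ¬((co L).1 = 0 ∧ (co L).2.1 = 0) := co_ne (A.isLine L hL)
  have hq : 0 < (co L).1 ^ 2 + (co L).2.1 ^ 2 := quad_pos hab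
  set p₀ : Pt2 := ![(co L).1 * (co L).2.2 / ((co L).1 ^ 2 + (co L).2.1 ^ 2),
    (co L).2.1 * (co L).2.2 / ((co L).1 ^ 2 + (co L).2.1 ^ 2)] with hp₀def
  set d : Pt2 := dir L with hddef
  have hp₀ : lf L p₀ = 0 := by
    show (co L).1 * p₀ 0 + (co L).2.1 * p₀ 1 - (co L).2.2 = 0
    rw [hp₀def]
    norm_num [Matrix.cons_val_zero, Matrix.cons_val_one, Matrix.head_cons]
    field_simp
    ring
  have hd : dlf L d = 0 := dlf_dir L
  have hdne : d ≠ 0 := dir_ne (A.isLine L hL)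
  have hd' : dlf L (-d) = 0 := by rw [dlf_neg, hd, neg_zero]
  have hdne' : (-d : Pt2) ≠ 0 := neg_ne_zero.2 hdne
  have hcard : (TT A L p₀ d).card = n - 1 := TT_card hL hp₀ hd hdne
  have hcard1 : 1 < (TT A L p₀ d).card := by omega
  have hTTne : (TT A L p₀ d).Nonempty := Finset.card_pos.1 (by omega)
  set tmin := (TT A L p₀ d).min' hTTne with htmindef
  set tmax := (TT A L p₀ d).max' hTTne with htmaxdef
  have hminTT : tmin ∈ TT A L p₀ d := (TT A L p₀ d).min'_mem hTTne
  have hmaxTT : tmax ∈ TT A L p₀ d := (TT A L p₀ d).max'_mem hTTne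
  have hminle : ∀ t ∈ TT A L p₀ d, tmin ≤ t := fun t ht => (TT A L p₀ d).min'_le t ht
  have hmaxge : ∀ t ∈ TT A L p₀ d, t ≤ tmax := fun t ht => (TT A L p₀ d).le_max' t ht
  have hminmax : tmin < tmax := Finset.min'_lt_max'_of_card _ hcard1
  set vlo := ep p₀ d tmin with hvlodef
  set vhi := ep p₀ d tmax with hvhidef
  have hvne : vlo ≠ vhi := fun h => ne_of_lt hminmax (ep_injective hdne h)
  have hvloL : vlo ∈ L := ep_mem_L hL hp₀ hd tmin
  have hvhiL : vhi ∈ L := ep_mem_L hL hp₀ hd tmax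
  have hendlo : A.IsEndVertex L vlo :=
    (isEndVertex_iff hL hp₀ hd hdne hminTT).2 (Or.inl hminle)
  have hendhi : A.IsEndVertex L vhi :=
    (isEndVertex_iff hL hp₀ hd hdne hmaxTT).2 (Or.inr hmaxge)
  have hendonly : ∀ v : Pt2, A.IsEndVertex L v → v = vlo ∨ v = vhi := by
    intro v hv
    have hvert := hv.1
    rw [verticesOn_eq hL hp₀ hd hdne] at hvert
    rcases hvert with ⟨t, htTT, rfl⟩
    have htTT' : t ∈ TT A L p₀ d := Finset.mem_coe.1 htTT
    rcases (isEndVertex_iff hL hp₀ hd hdne htTT').1 hv with h | h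
    · left
      have ht : t = tmin := le_antisymm (h tmin hminTT) (hminle t htTT')
      rw [ht, hvlodef]
    · right
      have ht : t = tmax := le_antisymm (hmaxge t htTT') (h tmax hmaxTT)
      rw [ht, hvhidef]
  rcases mem_TT.1 hminTT with ⟨Mlo, hMlo, hMloL, htvlo⟩
  rcases mem_TT.1 hmaxTT with ⟨Mhi, hMhi, hMhiL, htvhi⟩
  have htlo : tmin = tv Mlo p₀ d := htvlo.symm
  have hbotlo : ∀ t ∈ TT A L p₀ d, t ≠ tmin → tmin < t := fun t ht hne =>
    lt_of_le_of_ne (hminle t ht) (Ne.symm hne)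
  have hthi' : -tmax = tv Mhi p₀ (-d) := by rw [tv_neg, htvhi]
  have hbothi : ∀ t ∈ TT A L p₀ (-d), t ≠ -tmax → -tmax < t := by
    intro t ht hne
    have h1 : -t ∈ TT A L p₀ d := mem_TT_neg.1 ht
    have h2 : -t ≤ tmax := hmaxge _ h1
    rcases eq_or_ne (-t) tmax with h3 | h3
    · exfalso
      exact hne (by linarith)
    · have : -t < tmax := lt_of_le_of_ne h2 h3
      linarith
  have hvhirep : vhi = ep p₀ (-d) (-tmax) := by rw [ep_neg, neg_neg]
  have Hlo := end_handler hL hp₀ hd hdne hn hMlo hMloL htlo hbotlo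
  have Hhi := end_handler hL hp₀ hd' hdne' hn hMhi hMhiL hthi' hbothi
  rw [← hvhirep] at Hhi
  -- weights are nonnegative
  have hwnn : ∀ v ∈ V, 0 ≤ w v L := by
    intro v hv
    by_cases hvL : v ∈ L
    · by_cases hex : ∃! E : Set Pt2, A.IsEdge E ∧ ¬ Bornology.IsBounded E ∧ v ∈ E
      · rcases hw_one v hv L hL hvL hex with ⟨h1, h2⟩
        by_cases hsub : ∃ E : Set Pt2, A.IsEdge E ∧ ¬ Bornology.IsBounded E ∧ v ∈ E ∧ E ⊆ L
        · rw [h1 hsub]; norm_num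
        · rw [h2 hsub]
      · rw [hw_half v hv L hL hvL hex]; norm_num
    · rw [hw_off v hv L hL hvL]
  have hsum2 : ∀ v1 v2 : Pt2, v1 ≠ v2 → v1 ∈ V → v2 ∈ V →
      w v1 L + w v2 L ≤ ∑ v ∈ V, w v L := by
    intro v1 v2 hne h1 h2
    have hsub : ({v1, v2} : Finset Pt2) ⊆ V := by
      intro x hx
      rcases Finset.mem_insert.1 hx with rfl | hx
      · exact h1
      · rw [Finset.mem_singleton.1 hx]; exact h2
    have := Finset.sum_le_sum_of_subset_of_nonneg hsub (fun v hv _ => hwnn v hv)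
    rwa [Finset.sum_insert (Finset.notMem_singleton.2 hne), Finset.sum_singleton] at this
  have hsum3 : ∀ v1 v2 v3 : Pt2, v1 ≠ v2 → v1 ≠ v3 → v2 ≠ v3 → v1 ∈ V → v2 ∈ V → v3 ∈ V →
      w v1 L + w v2 L + w v3 L ≤ ∑ v ∈ V, w v L := by
    intro v1 v2 v3 h12 h13 h23 m1 m2 m3
    have hsub : ({v1, v2, v3} : Finset Pt2) ⊆ V := by
      intro x hx
      rcases Finset.mem_insert.1 hx with rfl | hx
      · exact m1
      · rcases Finset.mem_insert.1 hx with rfl | hx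
        · exact m2
        · rw [Finset.mem_singleton.1 hx]; exact m3
    have hs := Finset.sum_le_sum_of_subset_of_nonneg hsub (fun v hv _ => hwnn v hv)
    rw [Finset.sum_insert (by simp [h12, h13]), Finset.sum_insert (by simp [h23]),
      Finset.sum_singleton] at hs
    linarith
  refine ⟨?_, ?_, ?_⟩
  · -- case h₂,₂
    intro hdeg2
    have hb_lo : A.bdeg vlo = 2 := hdeg2 _ hendlo
    have hb_hi : A.bdeg vhi = 2 := hdeg2 _ hendhi
    have Wlo : w vlo L = 1 / 2 := by
      rcases Hlo with ⟨_, hev, hnu, _⟩ | ⟨h3, _⟩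
      · exact hw_half _ ((hV _).2 hev) L hL hvloL hnu
      · rw [hb_lo] at h3; exact absurd h3 (by norm_num)
    have Whi : w vhi L = 1 / 2 := by
      rcases Hhi with ⟨_, hev, hnu, _⟩ | ⟨h3, _⟩
      · exact hw_half _ ((hV _).2 hev) L hL hvhiL hnu
      · rw [hb_hi] at h3; exact absurd h3 (by norm_num)
    have := hsum2 vlo vhi hvne ((hV _).2 (by
      rcases Hlo with ⟨_, hev, _⟩ | ⟨_, hev, _⟩ <;> exact hev))
      ((hV _).2 (by rcases Hhi with ⟨_, hev, _⟩ | ⟨_, hev, _⟩ <;> exact hev))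
    rw [Wlo, Whi] at this
    linarith
  · -- case h₃,₃
    intro hdeg3
    have hb_lo : A.bdeg vlo = 3 := hdeg3 _ hendlo
    have hb_hi : A.bdeg vhi = 3 := hdeg3 _ hendhi
    have Wlo : w vlo L = 1 := by
      rcases Hlo with ⟨h2, _⟩ | ⟨_, hev, hexu, hexsub, _⟩
      · rw [hb_lo] at h2; exact absurd h2 (by norm_num)
      · exact (hw_one _ ((hV _).2 hev) L hL hvloL hexu).1 hexsub
    have Whi : w vhi L = 1 := by
      rcases Hhi with ⟨h2, _⟩ | ⟨_, hev, hexu, hexsub, _⟩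
      · rw [hb_hi] at h2; exact absurd h2 (by norm_num)
      · exact (hw_one _ ((hV _).2 hev) L hL hvhiL hexu).1 hexsub
    have := hsum2 vlo vhi hvne ((hV _).2 (by
      rcases Hlo with ⟨_, hev, _⟩ | ⟨_, hev, _⟩ <;> exact hev))
      ((hV _).2 (by rcases Hhi with ⟨_, hev, _⟩ | ⟨_, hev, _⟩ <;> exact hev))
    rw [Wlo, Whi] at this
    linarith
  · -- case h₂,₃
    rintro ⟨v₁, v₂, hne12, hE1, hE2, hb1, hb2⟩
    rcases hendonly v₁ hE1 with rfl | rfl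
    · -- v₁ = vlo (bdeg 2), so v₂ = vhi (bdeg 3)
      rcases hendonly v₂ hE2 with rfl | rfl
      · exact absurd rfl hne12
      · obtain ⟨_, hev_lo, hnu_lo, hstart⟩ :=
          Hlo.resolve_right (fun h => by rw [hb1] at h; exact absurd h.1 (by norm_num))
        obtain ⟨_, hev_hi, hexu_hi, hexsub_hi, hnotend⟩ :=
          Hhi.resolve_left (fun h => by rw [hb2] at h; exact absurd h.1 (by norm_num))
        obtain ⟨u, huext, hunone, huL, hune1, hune2⟩ :=
          case3_walk hL hp₀ hd hdne hn hminTT hmaxTT hmaxge hminmax hstart hnotend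
        have Wlo : w vlo L = 1 / 2 := hw_half _ ((hV _).2 hev_lo) L hL hvloL hnu_lo
        have Whi : w vhi L = 1 :=
          (hw_one _ ((hV _).2 hev_hi) L hL hvhiL hexu_hi).1 hexsub_hi
        have Wu : w u L = 1 / 2 :=
          hw_half _ ((hV _).2 huext) L hL huL (fun hex => hunone hex.exists)
        have := hsum3 vlo vhi u hvne (Ne.symm hune1) (Ne.symm hune2)
          ((hV _).2 hev_lo) ((hV _).2 hev_hi) ((hV _).2 huext)
        rw [Wlo, Whi, Wu] at this
        linarith
    · -- v₁ = vhi (bdeg 2), so v₂ = vlo (bdeg 3) : reversed orientation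
      rcases hendonly v₂ hE2 with rfl | rfl
      · obtain ⟨_, hev_hi, hnu_hi, hstart⟩ :=
          Hhi.resolve_right (fun h => by rw [hb1] at h; exact absurd h.1 (by norm_num))
        obtain ⟨_, hev_lo, hexu_lo, hexsub_lo, hnotend⟩ :=
          Hlo.resolve_left (fun h => by rw [hb2] at h; exact absurd h.1 (by norm_num))
        -- data for the reversed walk
        have hminTT' : -tmax ∈ TT A L p₀ (-d) := mem_TT_neg.2 (by rwa [neg_neg])
        have hmaxTT' : -tmin ∈ TT A L p₀ (-d) := mem_TT_neg.2 (by rwa [neg_neg])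
        have hmaxge' : ∀ t ∈ TT A L p₀ (-d), t ≤ -tmin := by
          intro t ht
          have := hminle _ (mem_TT_neg.1 ht)
          linarith
        have hlt' : -tmax < -tmin := by linarith
        have hnotend' : ¬ A.IsExternalEdge (EdgePlus A L p₀ (-(-d)) (- -tmin)) := by
          rw [neg_neg, neg_neg]
          exact hnotend
        obtain ⟨u, huext, hunone, huL, hune1, hune2⟩ :=
          case3_walk hL hp₀ hd' hdne' hn hminTT' hmaxTT' hmaxge' hlt' hstart hnotend'
        have hune1' : u ≠ vhi := by
          rwa [ep_neg, neg_neg] at hune1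
        have hune2' : u ≠ vlo := by
          rwa [ep_neg, neg_neg] at hune2
        have Whi : w vhi L = 1 / 2 := hw_half _ ((hV _).2 hev_hi) L hL hvhiL hnu_hi
        have Wlo : w vlo L = 1 :=
          (hw_one _ ((hV _).2 hev_lo) L hL hvloL hexu_lo).1 hexsub_lo
        have Wu : w u L = 1 / 2 :=
          hw_half _ ((hV _).2 huext) L hL huL (fun hex => hunone hex.exists)
        have := hsum3 vlo vhi u hvne (Ne.symm hune2') (Ne.symm hune1')
          ((hV _).2 hev_lo) ((hV _).2 hev_hi) ((hV _).2 huext)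
        rw [Wlo, Whi, Wu] at this
        linarith
      · exact absurd rfl hne12
end
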